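/- arXiv:2503.19694 — 9 statements merged into one kernel-verified Lean document; each statement's English description precedes it below -/
import Mathlib

section
/- Let $\mathbf{d} = (d_1,\dots,d_n)$ be nonnegative integers and let $\mathcal{T}_{\mathbf{d}}$ be the set of two-row rectangular semistandard Young tableaux with entries in $\{1,\dots,n\}$ containing at most $d_i$ copies of $i$ for each $i$. Then the number of sequences that arise as the first row of a tableau in $\mathcal{T}_{\mathbf{d}}$ equals the number of sequences that arise as the second row of a tableau in $\mathcal{T}_{\mathbf{d}}$. -/
/-!
Encode a weakly increasing row by its prefix counts `i ↦ #{entries < i}`, and call a tableau tight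
if at every value `i` either the column condition or the multiplicity bound for `i` holds with
equality. For a fixed first row, the second-row counts of a tight tableau obey a forward recursion
whose solution is the pointwise largest admissible second row; symmetrically, for a fixed second
row, the first-row counts obey a backward recursion whose solution is the pointwise smallest
admissible first row. So every first row and every second row lies in exactly one tight tableau,
and tight tableaux are the graph of a bijection between the two sets.
-/

/-- `a` and `b` are the first and second rows of a two-row rectangular
semistandard Young tableau with entries in `Fin n` (entries labelled
`0,…,n-1`) containing at most `d i` copies of each entry `i`. -/
def IsTwoRowSSYT {n : ℕ} (d : Fin n → ℕ) (a b : List (Fin n)) : Prop :=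
  a.length = b.length ∧
  List.Pairwise (· ≤ ·) a ∧ List.Pairwise (· ≤ ·) b ∧
  (∀ (m : ℕ) (ha : m < a.length) (hb : m < b.length), a.get ⟨m, ha⟩ < b.get ⟨m, hb⟩) ∧
  ∀ i : Fin n, a.count i + b.count i ≤ d i

theorem List.Forall₂.countP_le {α β : Type*} {R : α → β → Prop} {p : α → Bool} {q : β → Bool}
    {l₁ : List α} {l₂ : List β} (h : List.Forall₂ R l₁ l₂) (hpq : ∀ x y, R x y → q y → p x) :
    l₂.countP q ≤ l₁.countP p := by
  induction h with
  | nil => simp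
  | cons hxy _ ih =>
    have := hpq _ _ hxy
    simp only [List.countP_cons]
    split_ifs <;> grind

section CountP

variable {α : Type*} [LinearOrder α]

theorem List.Pairwise.succ_le_countP_le_getElem {l : List α} (hl : l.Pairwise (· ≤ ·)) {k : ℕ}
    (hk : k < l.length) : k + 1 ≤ l.countP (· ≤ l[k]) := by
  induction l generalizing k with
  | nil => simp at hk
  | cons x l ih =>
    rw [List.pairwise_cons] at hl
    cases k with
    | zero => simp
    | succ k =>
      have hk : k < l.length := by simpa using hk
      have hx : x ≤ l[k] := hl.1 _ (List.getElem_mem _)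
      simpa [List.countP_cons, hx] using ih hl.2 hk

theorem List.Pairwise.countP_lt_getElem_le {l : List α} (hl : l.Pairwise (· ≤ ·)) {k : ℕ}
    (hk : k < l.length) : l.countP (· < l[k]) ≤ k := by
  induction l generalizing k with
  | nil => simp at hk
  | cons x l ih =>
    rw [List.pairwise_cons] at hl
    cases k with
    | zero =>
      rw [Nat.le_zero, List.countP_eq_zero]
      rintro y (_ | ⟨_, hy⟩)
      · simp
      · simpa using hl.1 y hy
    | succ k =>
      have := ih hl.2 (k := k) (by simpa using hk)
      simp only [List.getElem_cons_succ, List.countP_cons]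
      split_ifs <;> omega

theorem List.countP_le_eq_countP_lt_add_count (l : List α) (a : α) :
    l.countP (· ≤ a) = l.countP (· < a) + l.count a := by
  induction l with
  | nil => rfl
  | cons x l ih =>
    simp only [List.countP_cons, List.count_cons, ih, beq_iff_eq]
    split_ifs <;> grind

end CountP

theorem Nat.card_eq_of_biTotal_biUnique {α β : Type*} {R : α → β → Prop} (ht : Relator.BiTotal R)
    (hu : Relator.BiUnique R) : Nat.card α = Nat.card β := by
  choose f hf using ht.1
  refine Nat.card_eq_of_bijective f ⟨fun a a' h => hu.1 (hf a) (h ▸ hf a'), fun b => ?_⟩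
  obtain ⟨a, ha⟩ := ht.2 b
  exact ⟨a, hu.2 (hf a) ha⟩

section Counts

variable {n : ℕ} {d : Fin n → ℕ} {A B : Fin (n + 1) → ℕ}

/-- `A i` and `B i` stand for the number of entries `< i` in the first and second row. -/
structure IsTableauCounts (d : Fin n → ℕ) (A B : Fin (n + 1) → ℕ) : Prop where
  first_zero : A 0 = 0
  second_zero : B 0 = 0
  first_mono : Monotone A
  second_mono : Monotone B
  column : ∀ i : Fin n, B i.succ ≤ A i.castSucc
  content : ∀ i : Fin n, A i.succ + B i.succ ≤ A i.castSucc + B i.castSucc + d i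
  last_eq : A (Fin.last n) = B (Fin.last n)

def IsTight (d : Fin n → ℕ) (A B : Fin (n + 1) → ℕ) : Prop :=
  ∀ i : Fin n, B i.succ = A i.castSucc ∨ A i.succ + B i.succ = A i.castSucc + B i.castSucc + d i

namespace IsTableauCounts

theorem first_succ_le (h : IsTableauCounts d A B) (i : Fin n) : A i.succ ≤ A i.castSucc + d i := by
  have := h.content i
  have := h.second_mono (Fin.castSucc_le_succ i)
  omega

theorem second_succ_le (h : IsTableauCounts d A B) (i : Fin n) : B i.succ ≤ B i.castSucc + d i := by
  have := h.content i
  have := h.first_mono (Fin.castSucc_le_succ i)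
  omega

end IsTableauCounts

def greedySecond (d : Fin n → ℕ) (A : Fin (n + 1) → ℕ) : Fin (n + 1) → ℕ :=
  Fin.induction 0 fun i b => min (A i.castSucc) (A i.castSucc + b + d i - A i.succ)

@[simp]
theorem greedySecond_zero : greedySecond d A 0 = 0 := rfl

theorem greedySecond_succ (i : Fin n) :
    greedySecond d A i.succ =
      min (A i.castSucc) (A i.castSucc + greedySecond d A i.castSucc + d i - A i.succ) :=
  Fin.induction_succ ..

theorem greedySecond_le (hA : Monotone A) (i : Fin (n + 1)) : greedySecond d A i ≤ A i := by
  induction i using Fin.induction with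
  | zero => simp
  | succ i _ =>
    rw [greedySecond_succ]
    exact (min_le_left _ _).trans (hA (Fin.castSucc_le_succ i))

theorem IsTableauCounts.le_greedySecond (h : IsTableauCounts d A B) (i : Fin (n + 1)) :
    B i ≤ greedySecond d A i := by
  induction i using Fin.induction with
  | zero => simp [h.second_zero]
  | succ i ih =>
    rw [greedySecond_succ]
    have := h.column i
    have := h.content i
    omega

theorem IsTableauCounts.isTableauCounts_greedySecond (h : IsTableauCounts d A B) :
    IsTableauCounts d A (greedySecond d A) := by
  refine ⟨h.first_zero, greedySecond_zero, h.first_mono, ?_, fun i => ?_, fun i => ?_, ?_⟩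
  · refine Fin.monotone_iff_le_succ.2 fun i => ?_
    rw [greedySecond_succ]
    have := h.first_succ_le i
    have := greedySecond_le (d := d) h.first_mono i.castSucc
    omega
  · rw [greedySecond_succ]
    exact min_le_left _ _
  · rw [greedySecond_succ]
    have := h.first_succ_le i
    omega
  · exact le_antisymm (h.last_eq ▸ h.le_greedySecond _) (greedySecond_le h.first_mono _)

theorem IsTableauCounts.isTight_greedySecond (h : IsTableauCounts d A B) :
    IsTight d A (greedySecond d A) := fun i => by
  rw [greedySecond_succ]
  have := h.first_succ_le i
  omega

theorem IsTableauCounts.eq_greedySecond (h : IsTableauCounts d A B) (ht : IsTight d A B) :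
    B = greedySecond d A := by
  funext i
  induction i using Fin.induction with
  | zero => simp [h.second_zero]
  | succ i ih =>
    rw [greedySecond_succ, ← ih]
    have := h.column i
    have := h.content i
    have := ht i
    omega

def greedyFirst (d : Fin n → ℕ) (B : Fin (n + 1) → ℕ) : Fin (n + 1) → ℕ :=
  Fin.reverseInduction (B (Fin.last n)) fun i a =>
    max (B i.succ) (a + B i.succ - (B i.castSucc + d i))

@[simp]
theorem greedyFirst_last : greedyFirst d B (Fin.last n) = B (Fin.last n) :=
  Fin.reverseInduction_last

theorem greedyFirst_castSucc (i : Fin n) :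
    greedyFirst d B i.castSucc =
      max (B i.succ) (greedyFirst d B i.succ + B i.succ - (B i.castSucc + d i)) :=
  Fin.reverseInduction_castSucc i

theorem le_greedyFirst (hB : Monotone B) (i : Fin (n + 1)) : B i ≤ greedyFirst d B i := by
  induction i using Fin.reverseInduction with
  | last => simp
  | cast i _ =>
    rw [greedyFirst_castSucc]
    exact (hB (Fin.castSucc_le_succ i)).trans (le_max_left _ _)

theorem IsTableauCounts.greedyFirst_le (h : IsTableauCounts d A B) (i : Fin (n + 1)) :
    greedyFirst d B i ≤ A i := by
  induction i using Fin.reverseInduction with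
  | last => simp [h.last_eq]
  | cast i ih =>
    rw [greedyFirst_castSucc]
    have := h.column i
    have := h.content i
    omega

theorem IsTableauCounts.isTableauCounts_greedyFirst (h : IsTableauCounts d A B) :
    IsTableauCounts d (greedyFirst d B) B := by
  refine ⟨?_, h.second_zero, ?_, h.second_mono, fun i => ?_, fun i => ?_, greedyFirst_last⟩
  · have := h.greedyFirst_le 0
    rw [h.first_zero] at this
    omega
  · refine Fin.monotone_iff_le_succ.2 fun i => ?_
    rw [greedyFirst_castSucc]
    have := h.second_succ_le i
    have := le_greedyFirst (d := d) h.second_mono i.succ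
    omega
  · rw [greedyFirst_castSucc]
    exact le_max_left _ _
  · rw [greedyFirst_castSucc]
    omega

theorem isTight_greedyFirst : IsTight d (greedyFirst d B) B := fun i => by
  rw [greedyFirst_castSucc]
  omega

theorem IsTableauCounts.eq_greedyFirst (h : IsTableauCounts d A B) (ht : IsTight d A B) :
    A = greedyFirst d B := by
  funext i
  induction i using Fin.reverseInduction with
  | last => simp [h.last_eq]
  | cast i ih =>
    rw [greedyFirst_castSucc, ← ih]
    have := h.column i
    have := h.content i
    have := ht i
    omega

end Counts

section RowCount

variable {n : ℕ}

def rowCount (l : List (Fin n)) (i : Fin (n + 1)) : ℕ := l.countP (·.castSucc < i)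

theorem rowCount_zero (l : List (Fin n)) : rowCount l 0 = 0 := by
  simp [rowCount]

theorem rowCount_last (l : List (Fin n)) : rowCount l (Fin.last n) = l.length := by
  simp [rowCount, Fin.castSucc_lt_last]

theorem rowCount_castSucc_eq_countP_lt (l : List (Fin n)) (i : Fin n) :
    rowCount l i.castSucc = l.countP (· < i) := by
  simp [rowCount]

theorem rowCount_succ_eq_countP_le (l : List (Fin n)) (i : Fin n) :
    rowCount l i.succ = l.countP (· ≤ i) := by
  simp [rowCount]

theorem rowCount_succ (l : List (Fin n)) (i : Fin n) :
    rowCount l i.succ = rowCount l i.castSucc + l.count i := by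
  rw [rowCount_succ_eq_countP_le, rowCount_castSucc_eq_countP_lt,
    List.countP_le_eq_countP_lt_add_count]

theorem rowCount_monotone (l : List (Fin n)) : Monotone (rowCount l) :=
  fun _ _ hij => List.countP_mono_left fun _ _ hx => by
    simpa using (of_decide_eq_true hx).trans_le hij

theorem eq_of_rowCount_eq {l l' : List (Fin n)} (hl : l.Pairwise (· ≤ ·))
    (hl' : l'.Pairwise (· ≤ ·)) (h : rowCount l = rowCount l') : l = l' := by
  refine List.Perm.eq_of_pairwise' hl hl' (List.perm_iff_count.2 fun i => ?_)
  have := rowCount_succ l i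
  have := rowCount_succ l' i
  simp only [h] at *
  omega

theorem exists_rowCount_eq {B : Fin (n + 1) → ℕ} (hB : Monotone B) (hB₀ : B 0 = 0) :
    ∃ l : List (Fin n), l.Pairwise (· ≤ ·) ∧ rowCount l = B := by
  let l := (∑ j : Fin n, Multiset.replicate (B j.succ - B j.castSucc) j).sort (· ≤ ·)
  have hcount (j : Fin n) : l.count j = B j.succ - B j.castSucc := by
    rw [← Multiset.coe_count, Multiset.sort_eq, Multiset.count_sum',
      Finset.sum_eq_single_of_mem j (Finset.mem_univ j)]
    · simp
    · intro k _ hk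
      simp [Multiset.count_replicate, hk]
  refine ⟨l, Multiset.pairwise_sort _ _, funext fun i => ?_⟩
  induction i using Fin.induction with
  | zero => rw [rowCount_zero, hB₀]
  | succ i ih =>
    rw [rowCount_succ, ih, hcount]
    have := hB (Fin.castSucc_le_succ i)
    omega

theorem forall_get_lt_get_iff_rowCount_le {a b : List (Fin n)} (ha : a.Pairwise (· ≤ ·))
    (hb : b.Pairwise (· ≤ ·)) (hlen : a.length = b.length) :
    (∀ (m : ℕ) (ha : m < a.length) (hb : m < b.length), a.get ⟨m, ha⟩ < b.get ⟨m, hb⟩) ↔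
      ∀ i : Fin n, rowCount b i.succ ≤ rowCount a i.castSucc := by
  simp only [rowCount_succ_eq_countP_le, rowCount_castSucc_eq_countP_lt]
  constructor
  · intro h i
    exact (List.forall₂_iff_get.2 ⟨hlen, h⟩).countP_le fun x y hxy hy => by
      simpa using hxy.trans_le (of_decide_eq_true hy)
  · intro h m hma hmb
    by_contra! hba
    have := h b[m]
    have := hb.succ_le_countP_le_getElem hmb
    have := ha.countP_lt_getElem_le hma
    have : a.countP (· < b[m]) ≤ a.countP (· < a[m]) :=
      List.countP_mono_left fun x _ hx => by simpa using (of_decide_eq_true hx).trans_le hba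
    simp only [List.get_eq_getElem] at *
    omega

end RowCount

section Tableaux

variable {n : ℕ} {d : Fin n → ℕ} {a a' b b' : List (Fin n)}

theorem isTwoRowSSYT_iff_isTableauCounts (ha : a.Pairwise (· ≤ ·)) (hb : b.Pairwise (· ≤ ·)) :
    IsTwoRowSSYT d a b ↔ IsTableauCounts d (rowCount a) (rowCount b) := by
  constructor
  · rintro ⟨hlen, -, -, hcol, hcount⟩
    refine ⟨rowCount_zero a, rowCount_zero b, rowCount_monotone a, rowCount_monotone b,
      (forall_get_lt_get_iff_rowCount_le ha hb hlen).1 hcol, fun i => ?_,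
      by simp [rowCount_last, hlen]⟩
    rw [rowCount_succ, rowCount_succ]
    have := hcount i
    omega
  · intro h
    have hlen : a.length = b.length := by simpa [rowCount_last] using h.last_eq
    refine ⟨hlen, ha, hb, (forall_get_lt_get_iff_rowCount_le ha hb hlen).2 h.column, fun i => ?_⟩
    have := h.content i
    rw [rowCount_succ, rowCount_succ] at this
    omega

theorem IsTwoRowSSYT.first_sorted (h : IsTwoRowSSYT d a b) : a.Pairwise (· ≤ ·) := h.2.1

theorem IsTwoRowSSYT.second_sorted (h : IsTwoRowSSYT d a b) : b.Pairwise (· ≤ ·) := h.2.2.1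

def IsTightTableau (d : Fin n → ℕ) (a b : List (Fin n)) : Prop :=
  IsTwoRowSSYT d a b ∧ IsTight d (rowCount a) (rowCount b)

theorem IsTwoRowSSYT.exists_isTightTableau_right (h : IsTwoRowSSYT d a b) :
    ∃ b', IsTightTableau d a b' := by
  have ha := h.first_sorted
  have hc := (isTwoRowSSYT_iff_isTableauCounts ha h.second_sorted).1 h
  have hg := hc.isTableauCounts_greedySecond
  obtain ⟨b', hb', hcount⟩ := exists_rowCount_eq hg.second_mono hg.second_zero
  rw [← hcount] at hg
  refine ⟨b', (isTwoRowSSYT_iff_isTableauCounts ha hb').2 hg, ?_⟩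
  rw [hcount]
  exact hc.isTight_greedySecond

theorem IsTwoRowSSYT.exists_isTightTableau_left (h : IsTwoRowSSYT d a b) :
    ∃ a', IsTightTableau d a' b := by
  have hb := h.second_sorted
  have hc := (isTwoRowSSYT_iff_isTableauCounts h.first_sorted hb).1 h
  have hg := hc.isTableauCounts_greedyFirst
  obtain ⟨a', ha', hcount⟩ := exists_rowCount_eq hg.first_mono hg.first_zero
  rw [← hcount] at hg
  refine ⟨a', (isTwoRowSSYT_iff_isTableauCounts ha' hb).2 hg, ?_⟩
  rw [hcount]
  exact isTight_greedyFirst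

theorem IsTightTableau.isTableauCounts (h : IsTightTableau d a b) :
    IsTableauCounts d (rowCount a) (rowCount b) :=
  (isTwoRowSSYT_iff_isTableauCounts h.1.first_sorted h.1.second_sorted).1 h.1

theorem IsTightTableau.right_unique (h : IsTightTableau d a b) (h' : IsTightTableau d a b') :
    b = b' :=
  eq_of_rowCount_eq h.1.second_sorted h'.1.second_sorted <|
    (h.isTableauCounts.eq_greedySecond h.2).trans (h'.isTableauCounts.eq_greedySecond h'.2).symm

theorem IsTightTableau.left_unique (h : IsTightTableau d a b) (h' : IsTightTableau d a' b) :
    a = a' :=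
  eq_of_rowCount_eq h.1.first_sorted h'.1.first_sorted <|
    (h.isTableauCounts.eq_greedyFirst h.2).trans (h'.isTableauCounts.eq_greedyFirst h'.2).symm

end Tableaux

/-- The number of sequences arising as the first row of a tableau in
`𝒯_𝐝` equals the number of sequences arising as the second row of a tableau
in `𝒯_𝐝`. -/
theorem card_firstRows_eq_card_secondRows {n : ℕ} (d : Fin n → ℕ) :
    Nat.card {a : List (Fin n) // ∃ b, IsTwoRowSSYT d a b} =
      Nat.card {b : List (Fin n) // ∃ a, IsTwoRowSSYT d a b} := by
  refine Nat.card_eq_of_biTotal_biUnique (R := fun a b => IsTightTableau d a.1 b.1)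
    ⟨fun ⟨a, _, h⟩ => ?_, fun ⟨b, _, h⟩ => ?_⟩
    ⟨fun _ _ _ h h' => Subtype.ext (h.left_unique h'),
      fun _ _ _ h h' => Subtype.ext (h.right_unique h')⟩
  · obtain ⟨b, hb⟩ := h.exists_isTightTableau_right
    exact ⟨⟨b, a, hb.1⟩, hb⟩
  · obtain ⟨a, ha⟩ := h.exists_isTightTableau_left
    exact ⟨⟨a, b, ha.1⟩, ha⟩
end

section
/- Let $\mathbf{d} = (d_1,\dots,d_n)$ with $d = \sum_i d_i$, let $m \le d/2$, and let $\mathcal{W}_{\mathbf{d},m}$ be the set of weak compositions $\beta$ of $m$ of length $n$ with $\beta_i \le d_i$ for all $i$. Then $\#\mathcal{W}_{\mathbf{d},m-1} \le \#\mathcal{W}_{\mathbf{d},m}$, i.e., the sequence of sizes $\#\mathcal{W}_{\mathbf{d},0}, \#\mathcal{W}_{\mathbf{d},1}, \dots, \#\mathcal{W}_{\mathbf{d},\lfloor d/2 \rfloor}$ is weakly increasing. -/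
open Finset

/-!
Write `c_d(m)` for the number of weak compositions of `m` bounded by `d`. Splitting off the first
part `β₀ = j ≤ d₀` gives `c_d(m) = ∑_{j ≤ d₀} c_{d'}(m - j)` with `d' = (d₁, …, dₙ₋₁)`, whence
`c_d(m + 1) - c_d(m) = c_{d'}(m + 1) - c_{d'}(m - d₀)`, the last term read as `0` if `m < d₀`.
We prove by induction on `n` the stronger claim `c_d(u) ≤ c_d(v)` whenever `u ≤ v` and
`u + v ≤ ∑ dᵢ`: for `2m + 1 ≤ ∑ dᵢ` the pair `(m - d₀, m + 1)` satisfies it for `d'`, so `c_d`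
increases on the first half, and the complement `β ↦ d - β` gives the symmetry
`c_d(m) = c_d(∑ dᵢ - m)` that covers the rest.
-/

theorem apply_le_apply_of_palindromic_of_le_succ {α : Type*} [Preorder α] {f : ℕ → α} {D : ℕ}
    (palindromic : ∀ u v, u + v = D → f u = f v) (le_succ : ∀ m, 2 * m + 1 ≤ D → f m ≤ f (m + 1))
    {u v : ℕ} (huv : u ≤ v) (huvD : u + v ≤ D) : f u ≤ f v := by
  have first_half : ∀ w, u ≤ w → 2 * w ≤ D + 1 → f u ≤ f w := by
    intro w huw
    induction w, huw using Nat.le_induction with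
    | base => exact fun _ => le_rfl
    | succ w _ ih => exact fun hw => (ih (by omega)).trans (le_succ w (by omega))
  by_cases hv : 2 * v ≤ D + 1
  · exact first_half v huv hv
  · rw [palindromic v (D - v) (by omega)]
    exact first_half (D - v) (by omega) (by omega)

section BoundedCompositions

variable {n : ℕ}

def boundedCompositions (d : Fin n → ℕ) (m : ℕ) : Finset (Fin n → ℕ) :=
  {β ∈ Iic d | ∑ i, β i = m}

variable {d : Fin n → ℕ} {m : ℕ}

theorem mem_boundedCompositions {β : Fin n → ℕ} :
    β ∈ boundedCompositions d m ↔ β ≤ d ∧ ∑ i, β i = m := by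
  rw [boundedCompositions, mem_filter, mem_Iic]

theorem card_boundedCompositions_eq_of_add_eq {m' : ℕ} (h : m + m' = ∑ i, d i) :
    #(boundedCompositions d m) = #(boundedCompositions d m') := by
  have complement : ∀ {k k'}, k + k' = ∑ i, d i →
      Set.MapsTo (d - ·) (boundedCompositions d k) (boundedCompositions d k') := by
    intro k k' hk β hβ
    rw [mem_coe, mem_boundedCompositions] at hβ ⊢
    refine ⟨tsub_le_self, ?_⟩
    simp only [Pi.sub_apply]
    rw [sum_tsub_distrib _ fun i _ => hβ.1 i]
    omega
  refine card_nbij' (d - ·) (d - ·) (complement h) (complement (by omega)) ?_ ?_ <;>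
  · intro β hβ
    rw [mem_coe, mem_boundedCompositions] at hβ
    exact tsub_tsub_cancel_of_le hβ.1

theorem cons_mem_boundedCompositions {d : Fin (n + 1) → ℕ} {j k : ℕ} {γ : Fin n → ℕ} :
    Fin.cons j γ ∈ boundedCompositions d (j + k) ↔
      j ≤ d 0 ∧ γ ∈ boundedCompositions (Fin.tail d) k := by
  simp only [mem_boundedCompositions, Fin.sum_univ_succ, Fin.cons_zero, Fin.cons_succ,
    Fin.cons_le, Nat.add_left_cancel_iff, and_assoc]

theorem card_boundedCompositions_succ (d : Fin (n + 1) → ℕ) (m : ℕ) :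
    #(boundedCompositions d m) = ∑ j ∈ range (d 0 + 1),
      if j ≤ m then #(boundedCompositions (Fin.tail d) (m - j)) else 0 := by
  have head_mem : Set.MapsTo (fun β : Fin (n + 1) → ℕ => β 0) (boundedCompositions d m)
      (range (d 0 + 1)) := by
    intro β hβ
    rw [mem_coe, mem_boundedCompositions] at hβ
    exact mem_range_succ_iff.mpr (hβ.1 0)
  rw [card_eq_sum_card_fiberwise head_mem]
  refine sum_congr rfl fun j hj => ?_
  split_ifs with hjm
  · obtain ⟨k, rfl⟩ := Nat.exists_eq_add_of_le hjm
    rw [Nat.add_sub_cancel_left]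
    refine card_nbij' Fin.tail (fun γ => Fin.cons j γ) ?_ ?_ ?_ ?_
    · intro β hβ
      rw [mem_coe, mem_filter] at hβ
      obtain ⟨hβ, hβj : β 0 = j⟩ := hβ
      rw [← Fin.cons_self_tail β, hβj, cons_mem_boundedCompositions] at hβ
      exact hβ.2
    · intro γ hγ
      rw [mem_coe, mem_filter, cons_mem_boundedCompositions]
      exact ⟨⟨mem_range_succ_iff.mp hj, hγ⟩, rfl⟩
    · intro β hβ
      rw [mem_coe, mem_filter] at hβ
      simpa [hβ.2] using Fin.cons_self_tail β
    · intro γ _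
      exact Fin.tail_cons _ _
  · refine card_eq_zero.mpr (filter_eq_empty_iff.mpr fun β hβ hβj => hjm ?_)
    rw [mem_boundedCompositions] at hβ
    exact hβj ▸ hβ.2 ▸ single_le_sum (fun i _ => Nat.zero_le (β i)) (mem_univ 0)

theorem card_boundedCompositions_succ_add (d : Fin (n + 1) → ℕ) (m : ℕ) :
    #(boundedCompositions d (m + 1)) +
        (if d 0 ≤ m then #(boundedCompositions (Fin.tail d) (m - d 0)) else 0) =
      #(boundedCompositions d m) + #(boundedCompositions (Fin.tail d) (m + 1)) := by
  rw [card_boundedCompositions_succ d (m + 1), card_boundedCompositions_succ d m,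
    sum_range_succ', sum_range_succ]
  simp only [Nat.add_le_add_iff_right, Nat.add_sub_add_right, zero_le, if_true, Nat.sub_zero]
  ring

theorem card_boundedCompositions_le_of_le_of_add_le (d : Fin n → ℕ) {u v : ℕ} (huv : u ≤ v)
    (huvd : u + v ≤ ∑ i, d i) :
    #(boundedCompositions d u) ≤ #(boundedCompositions d v) := by
  induction n generalizing u v with
  | zero =>
    obtain ⟨rfl, rfl⟩ : u = 0 ∧ v = 0 := by simp only [univ_eq_empty, sum_empty] at huvd; omega
    rfl
  | succ n ih =>
    have sum_eq : ∑ i, d i = d 0 + ∑ i, Fin.tail d i := Fin.sum_univ_succ d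
    refine apply_le_apply_of_palindromic_of_le_succ (f := fun m => #(boundedCompositions d m))
      (fun u v h => card_boundedCompositions_eq_of_add_eq h) (fun m hm => ?_) huv huvd
    have tail_le : (if d 0 ≤ m then #(boundedCompositions (Fin.tail d) (m - d 0)) else 0) ≤
        #(boundedCompositions (Fin.tail d) (m + 1)) := by
      split_ifs with hm0
      · exact ih (Fin.tail d) (by omega) (by omega)
      · exact Nat.zero_le _
    have := card_boundedCompositions_succ_add d m
    omega

end BoundedCompositions

theorem card_boundedCompositions_monotone_general
    {n : ℕ} (d : Fin n → ℕ) (D : ℕ) (hD : D = ∑ i, d i)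
    (m : ℕ) (hm2 : 2 * m ≤ D) :
    Nat.card {β : Fin n → ℕ // (∀ i, β i ≤ d i) ∧ ∑ i, β i = m - 1} ≤
      Nat.card {β : Fin n → ℕ // (∀ i, β i ≤ d i) ∧ ∑ i, β i = m} := by
  have card_eq (k : ℕ) : Nat.card {β : Fin n → ℕ // (∀ i, β i ≤ d i) ∧ ∑ i, β i = k} =
      #(boundedCompositions d k) := by
    rw [← Nat.card_eq_finsetCard]
    exact Nat.card_congr <| Equiv.subtypeEquivRight fun β => by
      rw [mem_boundedCompositions, Pi.le_def]
  rw [card_eq, card_eq]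
  exact card_boundedCompositions_le_of_le_of_add_le d (Nat.sub_le m 1) (by omega)

/-- For `m ≤ d/2` (where `d = d₁ + ⋯ + dₙ`), the number of weak compositions
of `m - 1` of length `n` with `i`-th part at most `dᵢ` is at most the number
of such weak compositions of `m`: the sizes `#𝒲_{𝐝,m}` are weakly increasing
for `m ≤ d/2`. -/
theorem card_boundedCompositions_monotone
    {n : ℕ} (d : Fin n → ℕ) (D : ℕ) (hD : D = ∑ i, d i)
    (m : ℕ) (hm : 1 ≤ m) (hm2 : 2 * m ≤ D) :
    Nat.card {β : Fin n → ℕ // (∀ i, β i ≤ d i) ∧ ∑ i, β i = m - 1} ≤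
      Nat.card {β : Fin n → ℕ // (∀ i, β i ≤ d i) ∧ ∑ i, β i = m} :=
  card_boundedCompositions_monotone_general d D hD m hm2
end

section
/- Let $\mathbf{d} = (d_1,\dots,d_n)$ be nonnegative integers and $I_{\mathbf{d}} = (x_1^{d_1+1},\dots,x_n^{d_n+1}, x_1+\cdots+x_n)$. For any two-row rectangular semistandard tableau $T$ with entries in $\{1,\dots,n\}$ containing at most $d_i$ copies of $i$, the polynomial $f_T = \prod_{(a<b) \text{ column of } T} (x_a - x_b)$ lies in the Macaulay inverse system $I_{\mathbf{d}}^\perp$; that is, $g(\partial/\partial x_1, \dots, \partial/\partial x_n)(f_T) = 0$ for every $g \in I_{\mathbf{d}}$. -/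
open MvPolynomial

/-- The differential operator `f(∂/∂x₁, …, ∂/∂xₙ)` applied to `g`:
the `⊙`-action `f ⊙ g`. -/
noncomputable def diffOp {n : ℕ} {F : Type*} [Field F]
    (f g : MvPolynomial (Fin n) F) : MvPolynomial (Fin n) F :=
  (AddMonoidAlgebra.coeff f).sum fun m c =>
    c • (List.finRange n).foldl (fun acc i => (fun h => pderiv i h)^[m i] acc) g

/-!
The partial derivatives commute, so `f ↦ f(∂)` is an algebra homomorphism from the polynomial
ring into a commutative algebra of operators; hence the polynomials `f` with `f ⊙ p = 0` form an
ideal, and it suffices to check the generators of `I_𝐝`. Each variable `x_i` occurs in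
`f_T = ∏ (x_a - x_b)` with degree at most `count_T i ≤ d_i`, so `∂_i^{d_i+1}` kills `f_T`; and
`∑ ∂_i` is a derivation vanishing on every factor `x_a - x_b`, so it kills the product.
-/

open scoped IsMulCommutative

theorem Derivation.map_list_prod_eq_zero {R A M : Type*} [CommSemiring R] [CommSemiring A]
    [AddCommMonoid M] [Algebra R A] [Module A M] [Module R M] (D : Derivation R A M)
    {l : List A} (h : ∀ x ∈ l, D x = 0) : D l.prod = 0 := by
  induction l with
  | nil => exact D.map_one_eq_zero
  | cons x l ih =>
    rw [List.prod_cons, D.leibniz, h x List.mem_cons_self,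
      ih fun y hy => h y (List.mem_cons_of_mem x hy), smul_zero, smul_zero, add_zero]

theorem List.foldl_apply_eq_prod_map_apply {R M ι : Type*} [CommSemiring R] [AddCommMonoid M]
    [Module R M] (A : Subalgebra R (Module.End R M)) [IsMulCommutative A] (φ : ι → A)
    (l : List ι) (x : M) :
    l.foldl (fun y i => (φ i : Module.End R M) y) x = ((l.map φ).prod : Module.End R M) x := by
  induction l generalizing x with
  | nil => rfl
  | cons i l ih =>
    rw [List.foldl_cons, ih, List.map_cons, List.prod_cons, mul_comm (φ i)]
    rfl

namespace MvPolynomial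

section CommSemiring

variable {σ R : Type*} [CommSemiring R]

theorem pderiv_pderiv_comm (i j : σ) (f : MvPolynomial σ R) :
    pderiv i (pderiv j f) = pderiv j (pderiv i f) := by
  ext m
  simp only [coeff_pderiv, Finsupp.add_apply]
  rw [add_right_comm m]
  rcases eq_or_ne i j with rfl | hij
  · rfl
  · simp only [Finsupp.single_eq_of_ne hij, Finsupp.single_eq_of_ne hij.symm, add_zero]
    ring

theorem add_single_mem_support_of_mem_support_iterate_pderiv {i : σ} {k : ℕ}
    {f : MvPolynomial σ R} {m : σ →₀ ℕ} (hm : m ∈ ((pderiv i)^[k] f).support) :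
    m + Finsupp.single i k ∈ f.support := by
  induction k generalizing m with
  | zero => simpa using hm
  | succ k ih =>
    rw [Function.iterate_succ_apply', mem_support_iff, coeff_pderiv] at hm
    rw [Finsupp.single_add, ← add_assoc, add_right_comm]
    exact ih (mem_support_iff.2 (left_ne_zero_of_mul hm))

theorem iterate_pderiv_eq_zero_of_degreeOf_lt {i : σ} {k : ℕ} {f : MvPolynomial σ R}
    (h : degreeOf i f < k) : (pderiv i)^[k] f = 0 := by
  refine support_eq_empty.1 (Finset.eq_empty_of_forall_notMem fun m hm => h.not_ge ?_)
  have hle := monomial_le_degreeOf i (add_single_mem_support_of_mem_support_iterate_pderiv hm)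
  rw [Finsupp.add_apply, Finsupp.single_eq_same] at hle
  omega

variable (σ R)

noncomputable def pderivSubalgebra : Subalgebra R (Module.End R (MvPolynomial σ R)) :=
  Algebra.adjoin R (Set.range fun i : σ => (pderiv i).toLinearMap)

instance : IsMulCommutative (pderivSubalgebra σ R) :=
  Algebra.isMulCommutative_adjoin R <| by
    rintro _ ⟨i, rfl⟩ _ ⟨j, rfl⟩
    exact LinearMap.ext (pderiv_pderiv_comm i j)

noncomputable def pderivAeval : MvPolynomial σ R →ₐ[R] pderivSubalgebra σ R :=
  aeval fun i => ⟨(pderiv i).toLinearMap, Algebra.subset_adjoin ⟨i, rfl⟩⟩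

variable {σ R}

theorem pderivAeval_X (i : σ) :
    (pderivAeval σ R (X i) : Module.End R _) = (pderiv i).toLinearMap := by
  simp [pderivAeval]

end CommSemiring

section CommRing

variable {σ R : Type*} [CommRing R]

theorem degrees_list_prod_X_sub_X_le [DecidableEq σ] (a b : List σ) :
    (((a.zip b).map fun q => (X q.1 - X q.2 : MvPolynomial σ R)).prod).degrees ≤
      (a : Multiset σ) + b := by
  induction a generalizing b with
  | nil => simp
  | cons x a ih =>
    cases b with
    | nil => simp
    | cons y b =>
      rw [List.zip_cons_cons, List.map_cons, List.prod_cons]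
      refine degrees_mul_le.trans ?_
      have hxy : (X x - X y : MvPolynomial σ R).degrees ≤ {x} + {y} :=
        degrees_sub_le.trans ((sup_le_sup (degrees_X' x) (degrees_X' y)).trans
          (Multiset.union_le_add _ _))
      calc _ ≤ ({x} + {y}) + ((a : Multiset σ) + b) := add_le_add hxy (ih b)
        _ = ((x :: a : List σ) : Multiset σ) + (y :: b : List σ) := by
          simp only [← Multiset.cons_coe, Multiset.singleton_add, Multiset.cons_add,
            Multiset.add_cons, Multiset.cons_swap]

theorem degreeOf_list_prod_X_sub_X_le [DecidableEq σ] (i : σ) (a b : List σ) :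
    degreeOf i ((a.zip b).map fun q => (X q.1 - X q.2 : MvPolynomial σ R)).prod ≤
      a.count i + b.count i := by
  rw [degreeOf_def, ← Multiset.coe_count, ← Multiset.coe_count, ← Multiset.count_add]
  exact Multiset.count_le_of_le i (degrees_list_prod_X_sub_X_le a b)

theorem sum_pderiv_list_prod_X_sub_X [Fintype σ] (l : List (σ × σ)) :
    ∑ i, pderiv i ((l.map fun q => (X q.1 - X q.2 : MvPolynomial σ R)).prod) = 0 := by
  classical
  have hsum (p : MvPolynomial σ R) :
      (∑ i, pderiv i : Derivation R (MvPolynomial σ R) _) p = ∑ i, pderiv i p := by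
    rw [← Derivation.coeFnAddMonoidHom_apply, map_sum, Finset.sum_apply]
    rfl
  have hX (j : σ) : ∑ i, pderiv i (X j : MvPolynomial σ R) = 1 := by
    simp [pderiv_X, Pi.single_apply]
  rw [← hsum]
  refine Derivation.map_list_prod_eq_zero _ fun x hx => ?_
  obtain ⟨q, -, rfl⟩ := List.mem_map.1 hx
  rw [map_sub, hsum, hsum, hX, hX, sub_self]

end CommRing

end MvPolynomial

section DiffOp

variable {n : ℕ} {F : Type*} [Field F]

theorem diffOp_add_left (f f' g : MvPolynomial (Fin n) F) :
    diffOp (f + f') g = diffOp f g + diffOp f' g :=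
  Finsupp.sum_add_index' (fun _ => zero_smul F _) fun _ _ _ => add_smul _ _ _

theorem diffOp_monomial (m : Fin n →₀ ℕ) (c : F) (g : MvPolynomial (Fin n) F) :
    diffOp (monomial m c) g =
      c • (List.finRange n).foldl (fun acc i => (⇑(pderiv i))^[m i] acc) g :=
  Finsupp.sum_single_index (zero_smul F _)

theorem diffOp_eq_pderivAeval (f g : MvPolynomial (Fin n) F) :
    diffOp f g = (pderivAeval (Fin n) F f : Module.End F _) g := by
  induction f using MvPolynomial.induction_on' with
  | monomial m c =>
    have hfold := List.foldl_apply_eq_prod_map_apply (pderivSubalgebra (Fin n) F)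
      (fun i => pderivAeval _ F (X i) ^ m i) (List.finRange n) g
    simp only [SubmonoidClass.coe_pow, pderivAeval_X, Module.End.coe_pow,
      Derivation.coeFn_coe] at hfold
    rw [diffOp_monomial, hfold, ← Fin.prod_univ_def, pderivAeval, aeval_monomial,
      Finsupp.prod_fintype _ _ fun _ => pow_zero _, ← Algebra.smul_def]
    simp only [aeval_X]
    rfl
  | add p q hp hq =>
    rw [diffOp_add_left, hp, hq, map_add, Subalgebra.coe_add, LinearMap.add_apply]

end DiffOp

theorem fT_mem_inverseSystem_general
    {n : ℕ} (F : Type*) [Field F]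
    (d : Fin n → ℕ) (I : Ideal (MvPolynomial (Fin n) F))
    (hI : I = Ideal.span ({f | ∃ i : Fin n, f = X i ^ (d i + 1)} ∪
        {∑ i : Fin n, X i}))
    (a b : List (Fin n))
    (hcount : ∀ i : Fin n, a.count i + b.count i ≤ d i) :
    ∀ g ∈ I,
      diffOp g (((a.zip b).map fun q =>
        (X q.1 - X q.2 : MvPolynomial (Fin n) F)).prod) = 0 := by
  set p : MvPolynomial (Fin n) F := ((a.zip b).map fun q => X q.1 - X q.2).prod
  suffices I ≤ (Ideal.torsionOf (pderivSubalgebra (Fin n) F) _ p).comap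
      (pderivAeval (Fin n) F) from
    fun g hg => (diffOp_eq_pderivAeval g p).trans (this hg)
  rw [hI, Ideal.span_le]
  rintro _ (⟨i, rfl⟩ | rfl) <;>
    simp only [SetLike.mem_coe, Ideal.mem_comap, Ideal.mem_torsionOf_iff, Subalgebra.smul_def,
      Module.End.smul_def]
  · rw [map_pow, SubmonoidClass.coe_pow, pderivAeval_X, Module.End.pow_apply]
    exact iterate_pderiv_eq_zero_of_degreeOf_lt
      ((degreeOf_list_prod_X_sub_X_le i a b).trans_lt (Nat.lt_succ_of_le (hcount i)))
  · rw [map_sum, AddSubmonoidClass.coe_finsetSum, LinearMap.sum_apply]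
    simp only [pderivAeval_X, Derivation.coeFn_coe]
    exact sum_pderiv_list_prod_X_sub_X _

/-- For a two-row rectangular semistandard tableau `T` with rows `a`, `b`,
entries in `Fin n`, and at most `dᵢ` copies of each entry `i`, the polynomial
`f_T = ∏_{(a<b) column of T} (x_a - x_b)` lies in the Macaulay inverse system
`I_𝐝^⊥` of `I_𝐝 = (x₁^{d₁+1},…,xₙ^{dₙ+1}, x₁+⋯+xₙ)`. -/
theorem fT_mem_inverseSystem
    {n : ℕ} (F : Type*) [Field F] [CharZero F]
    (d : Fin n → ℕ) (I : Ideal (MvPolynomial (Fin n) F))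
    (hI : I = Ideal.span ({f | ∃ i : Fin n, f = X i ^ (d i + 1)} ∪
        {∑ i : Fin n, X i}))
    (a b : List (Fin n))
    (hlen : a.length = b.length)
    (ha : List.Pairwise (· ≤ ·) a) (hb : List.Pairwise (· ≤ ·) b)
    (hcol : ∀ (m : ℕ) (hma : m < a.length) (hmb : m < b.length),
      a.get ⟨m, hma⟩ < b.get ⟨m, hmb⟩)
    (hcount : ∀ i : Fin n, a.count i + b.count i ≤ d i) :
    ∀ g ∈ I,
      diffOp g (((a.zip b).map fun q =>
        (X q.1 - X q.2 : MvPolynomial (Fin n) F)).prod) = 0 :=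
  fT_mem_inverseSystem_general F d I hI a b hcount
end

section
/- Fix a term order $\prec$ on monomials of $\mathbb{F}[x_1,\dots,x_n]$ (characteristic-zero field) and let $I$ be a homogeneous ideal with inverse system $I^\perp$. For nonzero $f$, let $\mathrm{fin}_\prec(f)$ denote the $\prec$-smallest monomial appearing in $f$ with nonzero coefficient. Then the set of standard monomials of $I$ with respect to $\prec$ (monomials not in the initial ideal $\mathrm{in}_\prec(I)$) equals $\{\mathrm{fin}_\prec(f) : f \in I^\perp, f \neq 0\}$. -/
open MvPolynomial

/-- `m` is the `≺`-largest monomial appearing in `f` with nonzero coefficient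
(`r` is the strict term order `≺` on exponent vectors). -/
def IsLeadMonomial {n : ℕ} {F : Type*} [Field F]
    (r : (Fin n →₀ ℕ) → (Fin n →₀ ℕ) → Prop)
    (f : MvPolynomial (Fin n) F) (m : Fin n →₀ ℕ) : Prop :=
  m ∈ f.support ∧ ∀ m' ∈ f.support, m' ≠ m → r m' m

/-- `m` is the `≺`-smallest monomial appearing in `f` with nonzero
coefficient. -/
def IsFinMonomial {n : ℕ} {F : Type*} [Field F]
    (r : (Fin n →₀ ℕ) → (Fin n →₀ ℕ) → Prop)
    (f : MvPolynomial (Fin n) F) (m : Fin n →₀ ℕ) : Prop :=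
  m ∈ f.support ∧ ∀ m' ∈ f.support, m' ≠ m → r m m'

/-!
Pair polynomials by `⟨g, f⟩ = ∑ₐ a! gₐ fₐ`, the constant term of `g ⊙ f`. Then `b!` times the
`b`-coefficient of `g ⊙ f` is `⟨x^b g, f⟩`, so `f ∈ I^⊥` iff `⟨g, f⟩ = 0` for all `g ∈ I`.

If `f ∈ I^⊥` has `fin(f) = m` and some `g ∈ I` had `in(g) = m`, then `m` would be the only
monomial of `g` that also occurs in `f`, so `⟨g, f⟩ = m! gₘ fₘ ≠ 0`.

Conversely, if `m` is standard, `x^m` lies outside the span of `I` and of the monomials below `m`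
(otherwise `x^m` minus its lower part is an element of `I` with initial monomial `m`). A linear
functional `φ` vanishing on that span with `φ(x^m) ≠ 0` gives `f = ∑_{|a| = |m|} φ(x^a)/a! · x^a`,
for which `⟨g, f⟩ = φ(g_{|m|})`. This vanishes on `I` because `I` is homogeneous, and the
`≺`-smallest monomial of `f` is `m`.
-/

section MultiIndexFactorial

variable {σ : Type*}

def multiIndexFactorial (a : σ →₀ ℕ) : ℕ :=
  a.prod fun _ k => k.factorial

theorem multiIndexFactorial_pos (a : σ →₀ ℕ) : 0 < multiIndexFactorial a :=
  Finset.prod_pos fun _ _ => Nat.factorial_pos _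

@[simp]
theorem multiIndexFactorial_zero : multiIndexFactorial (0 : σ →₀ ℕ) = 1 :=
  Finsupp.prod_zero_index

theorem multiIndexFactorial_add_single (b : σ →₀ ℕ) (i : σ) :
    multiIndexFactorial (b + Finsupp.single i 1) = multiIndexFactorial b * (b i + 1) := by
  classical
  have herase : (b + Finsupp.single i 1).erase i = b.erase i := by
    ext j
    by_cases hj : j = i <;> simp [hj]
  unfold multiIndexFactorial
  rw [← Finsupp.mul_prod_erase' _ i _ fun _ => rfl, ← Finsupp.mul_prod_erase' b i _ fun _ => rfl,
    herase, Finsupp.add_apply, Finsupp.single_eq_same, Nat.factorial_succ]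
  ring

end MultiIndexFactorial

section WeightedCoeff

variable {σ R : Type*} [CommSemiring R]

theorem multiIndexFactorial_mul_coeff_pderiv (i : σ) (f : MvPolynomial σ R) (b : σ →₀ ℕ) :
    (multiIndexFactorial b : R) * coeff b (pderiv i f) =
      multiIndexFactorial (b + Finsupp.single i 1) * coeff (b + Finsupp.single i 1) f := by
  rw [coeff_pderiv, multiIndexFactorial_add_single]
  push_cast
  ring

theorem multiIndexFactorial_mul_coeff_iterate_pderiv (i : σ) (k : ℕ) (f : MvPolynomial σ R)
    (b : σ →₀ ℕ) :
    (multiIndexFactorial b : R) * coeff b ((fun h => pderiv i h)^[k] f) =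
      multiIndexFactorial (b + Finsupp.single i k) * coeff (b + Finsupp.single i k) f := by
  induction k generalizing f with
  | zero => simp
  | succ k ih =>
    rw [Function.iterate_succ_apply, ih, multiIndexFactorial_mul_coeff_pderiv, add_assoc,
      ← Finsupp.single_add]

theorem multiIndexFactorial_mul_coeff_foldl_iterate_pderiv (l : List σ) (k : σ → ℕ)
    (f : MvPolynomial σ R) (b : σ →₀ ℕ) :
    (multiIndexFactorial b : R) *
        coeff b (l.foldl (fun acc i => (fun h => pderiv i h)^[k i] acc) f) =
      multiIndexFactorial (b + (l.map fun i => Finsupp.single i (k i)).sum) *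
        coeff (b + (l.map fun i => Finsupp.single i (k i)).sum) f := by
  induction l generalizing f with
  | nil => simp
  | cons i l ih =>
    rw [List.foldl_cons, ih, multiIndexFactorial_mul_coeff_iterate_pderiv, List.map_cons,
      List.sum_cons, add_assoc, add_comm (Finsupp.single i (k i))]

theorem support_monomial_one_mul (c : σ →₀ ℕ) (g : MvPolynomial σ R) :
    (monomial c 1 * g).support = g.support.map (addLeftEmbedding c) :=
  AddMonoidAlgebra.support_coeff_single_mul g 1 (fun y => by rw [one_mul]) c

def apolarPairing (g f : MvPolynomial σ R) : R :=
  ∑ a ∈ g.support, coeff a g * (multiIndexFactorial a * coeff a f)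

theorem apolarPairing_monomial_one_mul (b : σ →₀ ℕ) (g f : MvPolynomial σ R) :
    apolarPairing (monomial b 1 * g) f =
      ∑ a ∈ g.support, coeff a g * (multiIndexFactorial (b + a) * coeff (b + a) f) := by
  simp [apolarPairing, support_monomial_one_mul]

end WeightedCoeff

section DiffOp

variable {n : ℕ} {F : Type*} [Field F]

theorem multiIndexFactorial_mul_coeff_diffOp (g f : MvPolynomial (Fin n) F) (b : Fin n →₀ ℕ) :
    (multiIndexFactorial b : F) * coeff b (diffOp g f) = apolarPairing (monomial b 1 * g) f := by
  have hsum (a : Fin n →₀ ℕ) :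
      ((List.finRange n).map fun i => Finsupp.single i (a i)).sum = a := by
    rw [← Fin.sum_univ_def, Finsupp.univ_sum_single]
  rw [apolarPairing_monomial_one_mul, diffOp, Finsupp.sum, coeff_sum, Finset.mul_sum]
  refine Finset.sum_congr rfl fun a _ => ?_
  rw [coeff_smul, smul_eq_mul, mul_left_comm, multiIndexFactorial_mul_coeff_foldl_iterate_pderiv,
    hsum]
  rfl

theorem coeff_zero_diffOp (g f : MvPolynomial (Fin n) F) :
    coeff 0 (diffOp g f) = apolarPairing g f := by
  simpa using multiIndexFactorial_mul_coeff_diffOp g f 0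

theorem forall_diffOp_eq_zero_iff [CharZero F] {I : Ideal (MvPolynomial (Fin n) F)}
    {f : MvPolynomial (Fin n) F} :
    (∀ g ∈ I, diffOp g f = 0) ↔ ∀ g ∈ I, apolarPairing g f = 0 := by
  refine ⟨fun h g hg => by rw [← coeff_zero_diffOp, h g hg, coeff_zero], fun h g hg => ?_⟩
  ext b
  have hb := multiIndexFactorial_mul_coeff_diffOp g f b
  rw [h _ (I.mul_mem_left _ hg)] at hb
  exact (mul_eq_zero.mp hb).resolve_left (Nat.cast_ne_zero.mpr (multiIndexFactorial_pos b).ne')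

end DiffOp

section TermOrder

variable {n : ℕ} {F : Type*} [Field F] {r : (Fin n →₀ ℕ) → (Fin n →₀ ℕ) → Prop}

noncomputable def initialIdeal (r : (Fin n →₀ ℕ) → (Fin n →₀ ℕ) → Prop) (I : Ideal (MvPolynomial (Fin n) F)) :
    Ideal (MvPolynomial (Fin n) F) :=
  Ideal.span {g | ∃ f ∈ I, f ≠ 0 ∧ ∃ m', IsLeadMonomial r f m' ∧ g = monomial m' 1}

theorem IsLeadMonomial.ne_zero {f : MvPolynomial (Fin n) F} {m : Fin n →₀ ℕ}
    (h : IsLeadMonomial r f m) : f ≠ 0 := by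
  rintro rfl
  simpa using h.1

theorem IsLeadMonomial.monomial_one_mul (hadd : ∀ a b c, r a b → r (a + c) (b + c))
    {g : MvPolynomial (Fin n) F} {m : Fin n →₀ ℕ} (h : IsLeadMonomial r g m) (c : Fin n →₀ ℕ) :
    IsLeadMonomial r (monomial c 1 * g) (c + m) := by
  simp only [IsLeadMonomial, support_monomial_one_mul, Finset.mem_map, addLeftEmbedding_apply,
    forall_exists_index, and_imp, forall_apply_eq_imp_iff₂]
  refine ⟨⟨m, h.1, rfl⟩, fun a ha hne => ?_⟩
  rw [add_comm c, add_comm c]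
  exact hadd _ _ c (h.2 a ha fun hm => hne (hm ▸ rfl))

theorem monomial_mem_initialIdeal_iff (hadd : ∀ a b c, r a b → r (a + c) (b + c))
    {I : Ideal (MvPolynomial (Fin n) F)} {m : Fin n →₀ ℕ} :
    monomial m 1 ∈ initialIdeal r I ↔ ∃ g ∈ I, IsLeadMonomial r g m := by
  refine ⟨fun hm => ?_, fun ⟨g, hgI, hg⟩ => Ideal.subset_span ⟨g, hgI, hg.ne_zero, m, hg, rfl⟩⟩
  have hspan : initialIdeal r I =
      Ideal.span ((monomial · 1) '' {m' | ∃ g ∈ I, IsLeadMonomial r g m'}) := by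
    refine congrArg Ideal.span (Set.ext fun p => ⟨?_, ?_⟩)
    · rintro ⟨g, hgI, -, m', hg, rfl⟩
      exact ⟨m', ⟨g, hgI, hg⟩, rfl⟩
    · rintro ⟨m', ⟨g, hgI, hg⟩, rfl⟩
      exact ⟨g, hgI, hg.ne_zero, m', hg, rfl⟩
  rw [hspan, mem_ideal_span_monomial_image] at hm
  obtain ⟨m', ⟨g, hgI, hg⟩, hle⟩ := hm m (by simp)
  refine ⟨monomial (m - m') 1 * g, I.mul_mem_left _ hgI, ?_⟩
  simpa [tsub_add_cancel_of_le hle] using hg.monomial_one_mul hadd (m - m')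

theorem apolarPairing_eq_of_isLeadMonomial_of_isFinMonomial (hirr : ∀ a, ¬ r a a)
    (htrans : ∀ a b c, r a b → r b c → r a c) {g f : MvPolynomial (Fin n) F} {m : Fin n →₀ ℕ}
    (hg : IsLeadMonomial r g m) (hf : IsFinMonomial r f m) :
    apolarPairing g f = coeff m g * (multiIndexFactorial m * coeff m f) := by
  refine Finset.sum_eq_single_of_mem m hg.1 fun a ha hne => ?_
  by_cases hfa : coeff a f = 0
  · simp [hfa]
  · exact (hirr m (htrans _ _ _ (hf.2 a (mem_support_iff.mpr hfa) hne) (hg.2 a ha hne))).elim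

theorem isLeadMonomial_monomial_one_sub (hirr : ∀ a, ¬ r a a) {z : MvPolynomial (Fin n) F}
    {m : Fin n →₀ ℕ} (hz : ↑z.support ⊆ {a | r a m}) : IsLeadMonomial r (monomial m 1 - z) m := by
  have hzm : coeff m z = 0 := notMem_support_iff.mp fun hm => hirr m (hz hm)
  refine ⟨by simp [mem_support_iff, hzm], fun a ha hne => hz ?_⟩
  rw [mem_support_iff, coeff_sub, coeff_monomial, if_neg (Ne.symm hne), zero_sub, neg_ne_zero]
    at ha
  exact mem_support_iff.mpr ha

theorem monomial_mem_initialIdeal_of_mem_sup (hirr : ∀ a, ¬ r a a)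
    {I : Ideal (MvPolynomial (Fin n) F)} {m : Fin n →₀ ℕ}
    (h : monomial m 1 ∈ I.restrictScalars F ⊔ restrictSupport F {a | r a m}) :
    monomial m 1 ∈ initialIdeal r I := by
  obtain ⟨y, hyI, z, hz, hyz⟩ := Submodule.mem_sup.mp h
  have hy := isLeadMonomial_monomial_one_sub hirr ((mem_restrictSupport_iff F).mp hz)
  rw [← hyz, add_sub_cancel_right] at hy
  exact Ideal.subset_span ⟨y, hyI, hy.ne_zero, _, hy, rfl⟩

end TermOrder

section DualPolynomial

variable {σ F : Type*} [Fintype σ] [DecidableEq σ] [Field F]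

noncomputable def dualPolynomial (d : ℕ) (φ : Module.Dual F (MvPolynomial σ F)) :
    MvPolynomial σ F :=
  ∑ a ∈ Finset.finsuppAntidiag Finset.univ d,
    monomial a (φ (monomial a 1) / multiIndexFactorial a)

theorem coeff_dualPolynomial (d : ℕ) (φ : Module.Dual F (MvPolynomial σ F)) (a : σ →₀ ℕ) :
    coeff a (dualPolynomial d φ) =
      if a.degree = d then φ (monomial a 1) / multiIndexFactorial a else 0 := by
  simp [dualPolynomial, coeff_sum, coeff_monomial, Finsupp.degree_eq_sum]

theorem apolarPairing_dualPolynomial [CharZero F] (d : ℕ) (φ : Module.Dual F (MvPolynomial σ F))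
    (g : MvPolynomial σ F) :
    apolarPairing g (dualPolynomial d φ) = φ (homogeneousComponent d g) := by
  have hfact (a : σ →₀ ℕ) : (multiIndexFactorial a : F) ≠ 0 :=
    Nat.cast_ne_zero.mpr (multiIndexFactorial_pos a).ne'
  simp only [apolarPairing, coeff_dualPolynomial, homogeneousComponent_apply, map_sum]
  rw [Finset.sum_filter]
  refine Finset.sum_congr rfl fun a _ => ?_
  split_ifs
  · rw [mul_div_cancel₀ _ (hfact a), ← smul_eq_mul, ← map_smul, smul_monomial, smul_eq_mul,
      mul_one]
  · simp

theorem isFinMonomial_dualPolynomial [CharZero F] {r : (Fin n →₀ ℕ) → (Fin n →₀ ℕ) → Prop}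
    (htotal : ∀ a b, a ≠ b → r a b ∨ r b a) {φ : Module.Dual F (MvPolynomial (Fin n) F)}
    {m : Fin n →₀ ℕ} (hm : φ (monomial m 1) ≠ 0) (hbelow : ∀ a, r a m → φ (monomial a 1) = 0) :
    IsFinMonomial r (dualPolynomial m.degree φ) m := by
  have hfact (a : Fin n →₀ ℕ) : (multiIndexFactorial a : F) ≠ 0 :=
    Nat.cast_ne_zero.mpr (multiIndexFactorial_pos a).ne'
  refine ⟨by simp [mem_support_iff, coeff_dualPolynomial, hm, hfact], fun a ha hne => ?_⟩
  rw [mem_support_iff, coeff_dualPolynomial] at ha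
  refine (htotal a m hne).resolve_left fun ham => ha ?_
  simp [hbelow a ham]

end DualPolynomial

section InverseSystem

variable {n : ℕ} {F : Type*} [Field F] [CharZero F] {r : (Fin n →₀ ℕ) → (Fin n →₀ ℕ) → Prop}
  {I : Ideal (MvPolynomial (Fin n) F)} {m : Fin n →₀ ℕ}

theorem monomial_notMem_initialIdeal_of_isFinMonomial (hirr : ∀ a, ¬ r a a)
    (htrans : ∀ a b c, r a b → r b c → r a c) (hadd : ∀ a b c, r a b → r (a + c) (b + c))
    {f : MvPolynomial (Fin n) F} (hf : ∀ g ∈ I, diffOp g f = 0) (hfm : IsFinMonomial r f m) :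
    monomial m 1 ∉ initialIdeal r I := by
  intro hm
  obtain ⟨g, hgI, hg⟩ := (monomial_mem_initialIdeal_iff hadd).mp hm
  have hpair := forall_diffOp_eq_zero_iff.mp hf g hgI
  rw [apolarPairing_eq_of_isLeadMonomial_of_isFinMonomial hirr htrans hg hfm] at hpair
  exact mul_ne_zero (mem_support_iff.mp hg.1) (mul_ne_zero
    (Nat.cast_ne_zero.mpr (multiIndexFactorial_pos m).ne') (mem_support_iff.mp hfm.1)) hpair

theorem exists_isFinMonomial_of_monomial_notMem_initialIdeal (hirr : ∀ a, ¬ r a a)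
    (htotal : ∀ a b, a ≠ b → r a b ∨ r b a)
    (hhom : ∀ f ∈ I, ∀ i : ℕ, homogeneousComponent i f ∈ I)
    (hm : monomial m 1 ∉ initialIdeal r I) :
    ∃ f : MvPolynomial (Fin n) F, (∀ g ∈ I, diffOp g f = 0) ∧ f ≠ 0 ∧ IsFinMonomial r f m := by
  set U := I.restrictScalars F ⊔ restrictSupport F {a | r a m}
  have hmU : monomial m 1 ∉ U := mt (monomial_mem_initialIdeal_of_mem_sup hirr) hm
  obtain ⟨φ, hφm, hφU⟩ := Submodule.exists_dual_map_eq_bot_of_notMem hmU inferInstance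
  have hφ : ∀ u ∈ U, φ u = 0 := fun u hu => by
    simpa [hφU] using Submodule.mem_map_of_mem (f := φ) hu
  have hfin : IsFinMonomial r (dualPolynomial m.degree φ) m :=
    isFinMonomial_dualPolynomial htotal hφm fun a ha =>
      hφ _ (Submodule.mem_sup_right ((monomial_mem_restrictSupport F).mpr (.inl ha)))
  refine ⟨dualPolynomial m.degree φ, forall_diffOp_eq_zero_iff.mpr fun g hg => ?_,
    fun h => by simpa [h] using hfin.1, hfin⟩
  rw [apolarPairing_dualPolynomial]
  exact hφ _ (Submodule.mem_sup_left (hhom g hg _))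

end InverseSystem

theorem standardMonomials_eq_finMonomials_of_inverseSystem_general
    {n : ℕ} (F : Type*) [Field F] [CharZero F]
    (r : (Fin n →₀ ℕ) → (Fin n →₀ ℕ) → Prop)
    (hirr : ∀ a, ¬ r a a)
    (htrans : ∀ a b c, r a b → r b c → r a c)
    (htotal : ∀ a b, a ≠ b → r a b ∨ r b a)
    (hadd : ∀ a b c : Fin n →₀ ℕ, r a b → r (a + c) (b + c))
    (I : Ideal (MvPolynomial (Fin n) F))
    (hhom : ∀ f ∈ I, ∀ i : ℕ, MvPolynomial.homogeneousComponent i f ∈ I) :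
    {m : Fin n →₀ ℕ |
        (MvPolynomial.monomial m 1 : MvPolynomial (Fin n) F) ∉
          Ideal.span {g : MvPolynomial (Fin n) F |
            ∃ f ∈ I, f ≠ 0 ∧ ∃ m', IsLeadMonomial r f m' ∧
              g = MvPolynomial.monomial m' 1}} =
      {m : Fin n →₀ ℕ | ∃ f : MvPolynomial (Fin n) F,
        (∀ g ∈ I, diffOp g f = 0) ∧ f ≠ 0 ∧ IsFinMonomial r f m} :=
  Set.ext fun _ =>
    ⟨exists_isFinMonomial_of_monomial_notMem_initialIdeal hirr htotal hhom,
      fun ⟨_, hf, _, hfm⟩ => monomial_notMem_initialIdeal_of_isFinMonomial hirr htrans hadd hf hfm⟩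

/-- For a term order `≺` and a homogeneous ideal `I`, the standard monomials
of `I` (monomials not in the initial ideal `in_≺(I)`) are exactly the
`≺`-smallest monomials `fin_≺(f)` of the nonzero elements `f` of the inverse
system `I^⊥`. -/
theorem standardMonomials_eq_finMonomials_of_inverseSystem
    {n : ℕ} (F : Type*) [Field F] [CharZero F]
    (r : (Fin n →₀ ℕ) → (Fin n →₀ ℕ) → Prop)
    (hirr : ∀ a, ¬ r a a)
    (htrans : ∀ a b c, r a b → r b c → r a c)
    (htotal : ∀ a b, a ≠ b → r a b ∨ r b a)
    (hbot : ∀ m : Fin n →₀ ℕ, m ≠ 0 → r 0 m)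
    (hadd : ∀ a b c : Fin n →₀ ℕ, r a b → r (a + c) (b + c))
    (I : Ideal (MvPolynomial (Fin n) F))
    (hhom : ∀ f ∈ I, ∀ i : ℕ, MvPolynomial.homogeneousComponent i f ∈ I) :
    {m : Fin n →₀ ℕ |
        (MvPolynomial.monomial m 1 : MvPolynomial (Fin n) F) ∉
          Ideal.span {g : MvPolynomial (Fin n) F |
            ∃ f ∈ I, f ≠ 0 ∧ ∃ m', IsLeadMonomial r f m' ∧
              g = MvPolynomial.monomial m' 1}} =
      {m : Fin n →₀ ℕ | ∃ f : MvPolynomial (Fin n) F,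
        (∀ g ∈ I, diffOp g f = 0) ∧ f ≠ 0 ∧ IsFinMonomial r f m} :=
  standardMonomials_eq_finMonomials_of_inverseSystem_general F r hirr htrans htotal hadd I hhom
end

section
/- Let $\mathbf{d} = (d_1,\dots,d_n)$ be nonnegative integers and $I_{\mathbf{d}} = (x_1^{d_1+1},\dots,x_n^{d_n+1}, x_1+\cdots+x_n) \subseteq \mathbb{F}[x_1,\dots,x_n]$, $\mathbb{F}$ of characteristic zero. Let $m = x_1^{e_1} \cdots x_n^{e_n}$ be a monomial such that for some $1 \le i \le n$, $2e_1 + 2e_2 + \cdots + 2e_{i-1} + e_i > d_1 + d_2 + \cdots + d_{i-1}$. Then there exists a nonzero polynomial $f \in I_{\mathbf{d}}$ whose lexicographically largest monomial is $m$. -/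
open MvPolynomial

/-- Strict lexicographic order on exponent vectors: `a <ₗₑₓ b` iff at the
first index where they differ, `a` is smaller. -/
def LexLt {n : ℕ} (a b : Fin n →₀ ℕ) : Prop :=
  ∃ i : Fin n, (∀ j < i, a j = b j) ∧ a i < b i

/-- `e` is the exponent vector of the lexicographically largest monomial
appearing in `f` with nonzero coefficient. -/
def IsLexLead {n : ℕ} {F : Type*} [Field F]
    (f : MvPolynomial (Fin n) F) (e : Fin n →₀ ℕ) : Prop :=
  e ∈ f.support ∧ ∀ e' ∈ f.support, e' ≠ e → LexLt e' e

namespace OneRowAux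

open Finset

variable {F : Type*} [Field F]

lemma lexLt_ne {n : ℕ} {a b : Fin n →₀ ℕ} (h : LexLt a b) : a ≠ b := by
  rintro rfl
  obtain ⟨i, -, hi⟩ := h
  exact lt_irrefl _ hi

lemma lexLt_add_left {n : ℕ} {a b : Fin n →₀ ℕ} (m : Fin n →₀ ℕ) (h : LexLt a b) :
    LexLt (m + a) (m + b) := by
  obtain ⟨i, hji, hi⟩ := h
  refine ⟨i, fun j hj => ?_, ?_⟩
  · simp [Finsupp.add_apply, hji j hj]
  · simp only [Finsupp.add_apply]
    omega

lemma lexLt_zero_coord {N : ℕ} {a b : Fin (N + 1) →₀ ℕ} (h : a 0 < b 0) : LexLt a b :=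
  ⟨0, fun j hj => absurd hj (Fin.not_lt_zero j), h⟩

/-- push an exponent vector on `Fin N` to `Fin (N+1)` via `Fin.succ`. -/
noncomputable def push {N : ℕ} (t : Fin N →₀ ℕ) : Fin (N + 1) →₀ ℕ := Finsupp.mapDomain Fin.succ t

lemma push_apply_zero {N : ℕ} (t : Fin N →₀ ℕ) : push t 0 = 0 :=
  Finsupp.mapDomain_notin_range _ _ (by rintro ⟨x, hx⟩; exact Fin.succ_ne_zero x hx)

lemma push_apply_succ {N : ℕ} (t : Fin N →₀ ℕ) (j : Fin N) : push t j.succ = t j :=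
  Finsupp.mapDomain_apply (Fin.succ_injective N) t j

lemma lexLt_push {N : ℕ} {a b : Fin N →₀ ℕ} (h : LexLt a b) : LexLt (push a) (push b) := by
  obtain ⟨i, hji, hi⟩ := h
  refine ⟨i.succ, fun j hj => ?_, ?_⟩
  · rcases Fin.eq_zero_or_eq_succ j with rfl | ⟨j', rfl⟩
    · rw [push_apply_zero, push_apply_zero]
    · rw [push_apply_succ, push_apply_succ]
      exact hji j' (by simpa [Fin.succ_lt_succ_iff] using hj)
  · rw [push_apply_succ, push_apply_succ]
    exact hi

lemma isLexLead_ne_zero {n : ℕ} {f : MvPolynomial (Fin n) F} {e : Fin n →₀ ℕ}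
    (h : IsLexLead f e) : f ≠ 0 := by
  intro h0
  have := h.1
  rw [h0] at this
  simp at this

lemma isLexLead_C_mul {n : ℕ} {f : MvPolynomial (Fin n) F} {e : Fin n →₀ ℕ} {γ : F}
    (hγ : γ ≠ 0) (h : IsLexLead f e) : IsLexLead (C γ * f) e := by
  have hsupp : ∀ m : Fin n →₀ ℕ, m ∈ (C γ * f).support ↔ m ∈ f.support := by
    intro m
    simp only [mem_support_iff, coeff_C_mul]
    constructor
    · intro hm hc; exact hm (by rw [hc, mul_zero])
    · intro hm; exact mul_ne_zero hγ hm
  exact ⟨(hsupp e).mpr h.1, fun e' he' hne => h.2 e' ((hsupp e').mp he') hne⟩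

lemma isLexLead_monomial {n : ℕ} (e : Fin n →₀ ℕ) :
    IsLexLead (monomial e (1 : F)) e := by
  constructor
  · rw [mem_support_iff]
    simp
  · intro e' he' hne
    classical
    rw [support_monomial, if_neg one_ne_zero] at he'
    exact absurd (Finset.mem_singleton.mp he') hne

lemma isLexLead_monomial_mul {n : ℕ} (m : Fin n →₀ ℕ) {f : MvPolynomial (Fin n) F}
    {e : Fin n →₀ ℕ} (h : IsLexLead f e) :
    IsLexLead (monomial m (1 : F) * f) (m + e) := by
  classical
  constructor
  · rw [mem_support_iff, coeff_monomial_mul, one_mul]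
    exact mem_support_iff.mp h.1
  · intro e' he' hne
    have hsub := MvPolynomial.support_mul (monomial m (1 : F)) f he'
    rw [Finset.mem_add] at hsub
    obtain ⟨y, hy, z, hz, rfl⟩ := hsub
    rw [support_monomial, if_neg (one_ne_zero : (1 : F) ≠ 0)] at hy
    rw [Finset.mem_singleton] at hy
    subst hy
    have hzne : z ≠ e := fun hzeq => hne (by rw [hzeq])
    exact lexLt_add_left y (h.2 z hz hzne)

lemma isLexLead_rename_succ {N : ℕ} {g : MvPolynomial (Fin N) F} {e : Fin N →₀ ℕ}
    (h : IsLexLead g e) : IsLexLead (rename Fin.succ g) (push e) := by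
  classical
  rw [IsLexLead, support_rename_of_injective (Fin.succ_injective N)]
  constructor
  · exact Finset.mem_image_of_mem _ h.1
  · intro e' he' hne
    obtain ⟨t, ht, rfl⟩ := Finset.mem_image.mp he'
    have : t ≠ e := by rintro rfl; exact hne rfl
    exact lexLt_push (h.2 t ht this)

lemma isLexLead_add_small {n : ℕ} {p Q : MvPolynomial (Fin n) F} {ℓ : Fin n →₀ ℕ}
    (hp : IsLexLead p ℓ) (hQ : ∀ m ∈ Q.support, LexLt m ℓ) : IsLexLead (p + Q) ℓ := by
  have hℓQ : coeff ℓ Q = 0 := by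
    by_contra hc
    exact lexLt_ne (hQ ℓ (mem_support_iff.mpr hc)) rfl
  constructor
  · rw [mem_support_iff, coeff_add, hℓQ, add_zero]
    exact mem_support_iff.mp hp.1
  · intro e' he' hne
    have := MvPolynomial.support_add he'
    rw [Finset.mem_union] at this
    rcases this with h1 | h1
    · exact hp.2 e' h1 hne
    · exact hQ e' h1

lemma support_mul_emb {N : ℕ} {Q : MvPolynomial (Fin (N + 1)) F}
    {hh : MvPolynomial (Fin N) F} {a : ℕ} (hQ : ∀ m ∈ Q.support, m 0 < a) :
    ∀ m ∈ (Q * rename Fin.succ hh).support, m 0 < a := by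
  classical
  intro m hm
  have hsub := MvPolynomial.support_mul Q (rename Fin.succ hh) hm
  rw [Finset.mem_add] at hsub
  obtain ⟨y, hy, z, hz, rfl⟩ := hsub
  have hz0 : z 0 = 0 := by
    rw [support_rename_of_injective (Fin.succ_injective N)] at hz
    obtain ⟨t, _, rfl⟩ := Finset.mem_image.mp hz
    exact push_apply_zero t
  have := hQ y hy
  simp only [Finsupp.add_apply, hz0, add_zero]
  exact this

lemma final_assemble {N : ℕ} {a : ℕ} {γ : F} (hγ : γ ≠ 0) {g : MvPolynomial (Fin N) F}
    {e' : Fin N →₀ ℕ} (hg : IsLexLead g e') {Q : MvPolynomial (Fin (N + 1)) F}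
    (hQ : ∀ m ∈ Q.support, m 0 < a) :
    IsLexLead (C γ * (X 0 ^ a * rename Fin.succ g) + Q) (Finsupp.single 0 a + push e') := by
  apply isLexLead_add_small
  · rw [X_pow_eq_monomial]
    exact isLexLead_C_mul hγ (isLexLead_monomial_mul _ (isLexLead_rename_succ hg))
  · intro m hm
    apply lexLt_zero_coord
    have h1 : (Finsupp.single (0 : Fin (N + 1)) a + push e') 0 = a := by
      simp [Finsupp.add_apply, push_apply_zero]
    rw [h1]
    exact hQ m hm
lemma exists_weights [CharZero F] (V : Finset ℕ) (b : ℕ) (hV : V.card = b + 1) :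
    ∃ ω : ℕ → F, (∀ r, r < b → ∑ j ∈ V, ω j * (j.choose r : F) = 0) ∧
      (∑ j ∈ V, ω j * (j.choose b : F)) ≠ 0 := by
  classical
  have hinj : Set.InjOn (fun k : ℕ => (k : F)) V := fun x _ y _ h => Nat.cast_injective h
  set ω : ℕ → F := fun j => (Lagrange.basis V (fun k : ℕ => (k : F)) j).coeff b with hω
  have key : ∀ q : Polynomial F, q.natDegree ≤ b →
      ∑ j ∈ V, ω j * q.eval (j : F) = q.coeff b := by
    intro q hq
    have hdeg : q.degree < (V.card : WithBot ℕ) := by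
      rw [hV]
      exact lt_of_le_of_lt Polynomial.degree_le_natDegree
        (by exact_mod_cast Nat.lt_succ_of_le hq)
    have h2 := Lagrange.eq_interpolate (s := V) (v := fun k : ℕ => (k : F)) hinj hdeg
    conv_rhs => rw [h2]
    rw [Lagrange.interpolate_apply, Polynomial.finset_sum_coeff]
    refine Finset.sum_congr rfl fun j hj => ?_
    rw [Polynomial.coeff_C_mul]
    ring
  refine ⟨ω, ?_, ?_⟩
  · intro r hr
    have h1 := key (descPochhammer F r) (by rw [descPochhammer_natDegree]; omega)
    rw [Polynomial.coeff_eq_zero_of_natDegree_lt (by rw [descPochhammer_natDegree]; omega)] at h1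
    have h2 : ∀ j ∈ V, ω j * (descPochhammer F r).eval ((j : ℕ) : F)
        = (r.factorial : F) * (ω j * (j.choose r : F)) := by
      intro j hj
      rw [descPochhammer_eval_eq_descFactorial, Nat.descFactorial_eq_factorial_mul_choose]
      push_cast
      ring
    rw [Finset.sum_congr rfl h2, ← Finset.mul_sum] at h1
    have hfac : (r.factorial : F) ≠ 0 := Nat.cast_ne_zero.mpr r.factorial_ne_zero
    exact (mul_eq_zero.mp h1).resolve_left hfac
  · intro hzero
    have h1 := key (descPochhammer F b) (le_of_eq (descPochhammer_natDegree F b))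
    have hmon : (descPochhammer F b).coeff b = 1 := by
      have := (monic_descPochhammer F b).coeff_natDegree
      rwa [descPochhammer_natDegree] at this
    rw [hmon] at h1
    have h2 : ∀ j ∈ V, ω j * (descPochhammer F b).eval ((j : ℕ) : F)
        = (b.factorial : F) * (ω j * (j.choose b : F)) := by
      intro j hj
      rw [descPochhammer_eval_eq_descFactorial, Nat.descFactorial_eq_factorial_mul_choose]
      push_cast
      ring
    rw [Finset.sum_congr rfl h2, ← Finset.mul_sum, hzero, mul_zero] at h1
    exact one_ne_zero h1.symm

lemma P_package [CharZero F] {N : ℕ} (A c a b : ℕ) (V : Finset ℕ) (hV : V.card = b + 1)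
    (hVle : ∀ j ∈ V, j ≤ a + b) (hU : ∀ j ∈ V, c ≤ j ∨ j + A ≤ a + b) :
    ∃ (P Q : MvPolynomial (Fin (N + 1)) F) (γ : F), γ ≠ 0 ∧
      P ∈ Ideal.span {(X 0 : MvPolynomial (Fin (N + 1)) F) ^ A, (∑ i, X i) ^ c} ∧
      P = C γ * (X 0 ^ a * (rename Fin.succ (∑ i : Fin N, X i)) ^ b) + Q ∧
      ∀ m ∈ Q.support, m 0 < a := by
  classical
  obtain ⟨ω, hlow, htop⟩ := exists_weights (F := F) V b hV
  set σp : MvPolynomial (Fin (N + 1)) F := rename Fin.succ (∑ i : Fin N, X i) with hσp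
  have hs : (∑ i : Fin (N + 1), (X i : MvPolynomial (Fin (N + 1)) F)) = X 0 + σp := by
    rw [Fin.sum_univ_succ, hσp, map_sum]
    simp
  set d2 := a + b with hd2
  set T : ℕ → MvPolynomial (Fin (N + 1)) F := fun r => X 0 ^ (d2 - r) * σp ^ r with hT
  set γf : ℕ → F := fun r => ∑ j ∈ V, ω j * (j.choose r : F) with hγf
  set P : MvPolynomial (Fin (N + 1)) F
    := ∑ j ∈ V, C (ω j) * (X 0 ^ (d2 - j) * (∑ i, X i) ^ j) with hP
  have hmem : P ∈ Ideal.span {(X 0 : MvPolynomial (Fin (N + 1)) F) ^ A, (∑ i, X i) ^ c} := by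
    apply Ideal.sum_mem
    intro j hj
    rcases hU j hj with hcj | hjA
    · have hsplit : C (ω j) * ((X 0 : MvPolynomial (Fin (N + 1)) F) ^ (d2 - j) * (∑ i, X i) ^ j)
          = (C (ω j) * (X 0 ^ (d2 - j) * (∑ i, X i) ^ (j - c))) * (∑ i, X i) ^ c := by
        have : ((∑ i, X i : MvPolynomial (Fin (N + 1)) F)) ^ j
            = (∑ i, X i) ^ (j - c) * (∑ i, X i) ^ c := by
          rw [← pow_add]
          congr 1
          omega
        rw [this]
        ring
      rw [hsplit]
      exact Ideal.mul_mem_left _ _ (Ideal.subset_span (by simp))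
    · have hsplit : C (ω j) * ((X 0 : MvPolynomial (Fin (N + 1)) F) ^ (d2 - j) * (∑ i, X i) ^ j)
          = (C (ω j) * (X 0 ^ (d2 - j - A) * (∑ i, X i) ^ j)) * X 0 ^ A := by
        have : ((X 0 : MvPolynomial (Fin (N + 1)) F)) ^ (d2 - j)
            = X 0 ^ (d2 - j - A) * X 0 ^ A := by
          rw [← pow_add]
          congr 1
          omega
        rw [this]
        ring
      rw [hsplit]
      exact Ideal.mul_mem_left _ _ (Ideal.subset_span (by simp))
  have hkey : P = ∑ r ∈ Finset.range (d2 + 1), C (γf r) * T r := by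
    rw [hP]
    have step1 : ∀ j ∈ V, C (ω j) * ((X 0 : MvPolynomial (Fin (N + 1)) F) ^ (d2 - j)
        * (∑ i, X i) ^ j)
        = ∑ r ∈ Finset.range (d2 + 1), C (ω j * (j.choose r : F)) * T r := by
      intro j hj
      have hjd2 : j ≤ d2 := hVle j hj
      rw [hs, add_comm (X 0 : MvPolynomial (Fin (N + 1)) F) σp, add_pow, Finset.mul_sum,
        Finset.mul_sum]
      rw [← Finset.sum_subset (Finset.range_subset_range.mpr (by omega : j + 1 ≤ d2 + 1)) ?van]
      case van =>
        intro r _ hrj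
        rw [Finset.mem_range, not_lt] at hrj
        rw [Nat.choose_eq_zero_of_lt (by omega)]
        simp
      apply Finset.sum_congr rfl
      intro r hr
      rw [Finset.mem_range] at hr
      have hrj : r ≤ j := by omega
      have hxp : (X 0 : MvPolynomial (Fin (N + 1)) F) ^ (d2 - j) * X 0 ^ (j - r)
          = X 0 ^ (d2 - r) := by
        rw [← pow_add]
        congr 1
        omega
      have hcast : ((j.choose r : ℕ) : MvPolynomial (Fin (N + 1)) F)
          = C ((j.choose r : ℕ) : F) := by
        rw [map_natCast (C : F →+* MvPolynomial (Fin (N + 1)) F)]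
      calc C (ω j) * (X 0 ^ (d2 - j) * (σp ^ r * X 0 ^ (j - r) * ((j.choose r : ℕ) : MvPolynomial (Fin (N + 1)) F)))
          = ((j.choose r : ℕ) : MvPolynomial (Fin (N + 1)) F) * C (ω j)
            * ((X 0 ^ (d2 - j) * X 0 ^ (j - r)) * σp ^ r) := by ring
        _ = C (ω j * (j.choose r : F)) * (X 0 ^ (d2 - r) * σp ^ r) := by
            rw [hxp, hcast, ← C_mul, mul_comm ((j.choose r : ℕ) : F) (ω j)]
        _ = C (ω j * (j.choose r : F)) * T r := by rw [hT]
    rw [Finset.sum_congr rfl step1, Finset.sum_comm]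
    refine Finset.sum_congr rfl fun r _ => ?_
    rw [← Finset.sum_mul, hγf]
    congr 1
    rw [map_sum]
  set Q : MvPolynomial (Fin (N + 1)) F := ∑ r ∈ Finset.Ioc b d2, C (γf r) * T r with hQ
  have hbd2 : b ≤ d2 := by omega
  have hPsplit : P = C (γf b) * (X 0 ^ a * σp ^ b) + Q := by
    rw [hkey, ← Finset.sum_range_add_sum_Ico _ (by omega : b + 1 ≤ d2 + 1),
      Finset.sum_range_succ]
    have hzero : ∑ r ∈ Finset.range b, C (γf r) * T r = 0 := by
      apply Finset.sum_eq_zero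
      intro r hr
      rw [Finset.mem_range] at hr
      have h0 : γf r = 0 := by simpa [hγf] using hlow r hr
      rw [h0]
      simp
    have hIco : Finset.Ico (b + 1) (d2 + 1) = Finset.Ioc b d2 := by
      ext x
      simp only [Finset.mem_Ico, Finset.mem_Ioc]
      omega
    have hTb : T b = X 0 ^ a * σp ^ b := by
      have : d2 - b = a := by omega
      rw [hT]
      dsimp only
      rw [this]
    rw [hzero, zero_add, hIco, hTb, hQ]
  have hQsupp : ∀ m ∈ Q.support, m 0 < a := by
    intro m hm
    rw [mem_support_iff] at hm
    rw [hQ, coeff_sum] at hm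
    obtain ⟨r, hr, hc⟩ := Finset.exists_ne_zero_of_sum_ne_zero hm
    rw [Finset.mem_Ioc] at hr
    rw [coeff_C_mul] at hc
    have hTc : coeff m (T r) ≠ 0 := fun h0 => hc (by rw [h0, mul_zero])
    have hmem' : m ∈ (T r).support := mem_support_iff.mpr hTc
    rw [hT] at hmem'
    have hsub := MvPolynomial.support_mul _ _ hmem'
    rw [Finset.mem_add] at hsub
    obtain ⟨y, hy, z, hz, rfl⟩ := hsub
    rw [support_X_pow] at hy
    rw [Finset.mem_singleton] at hy
    subst hy
    have hz0 : z 0 = 0 := by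
      have : σp ^ r = rename Fin.succ ((∑ i : Fin N, X i) ^ r) := by
        rw [map_pow, hσp]
      rw [this, support_rename_of_injective (Fin.succ_injective N)] at hz
      obtain ⟨t, _, rfl⟩ := Finset.mem_image.mp hz
      exact push_apply_zero t
    simp only [Finsupp.add_apply, hz0, add_zero, Finsupp.single_eq_same]
    omega
  exact ⟨P, Q, γf b, htop, hmem, hPsplit, hQsupp⟩

noncomputable def tail {N : ℕ} (e : Fin (N + 1) →₀ ℕ) : Fin N →₀ ℕ :=
  Finsupp.equivFunOnFinite.symm (fun j => e j.succ)

lemma tail_apply {N : ℕ} (e : Fin (N + 1) →₀ ℕ) (j : Fin N) : tail e j = e j.succ := by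
  simp [tail]

lemma eq_single_add_push {N : ℕ} (e : Fin (N + 1) →₀ ℕ) :
    e = Finsupp.single 0 (e 0) + push (tail e) := by
  ext i
  rcases Fin.eq_zero_or_eq_succ i with rfl | ⟨j, rfl⟩
  · simp [push_apply_zero]
  · rw [Finsupp.add_apply, push_apply_succ, tail_apply, Finsupp.single_apply,
      if_neg (fun hh => Fin.succ_ne_zero j hh.symm), zero_add]

lemma isLexLead_monomial' {n : ℕ} (e : Fin n →₀ ℕ) {γ : F} (hγ : γ ≠ 0) :
    IsLexLead (monomial e γ) e := by
  classical
  constructor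
  · rw [mem_support_iff]
    simp [hγ]
  · intro e' he' hne
    rw [support_monomial, if_neg hγ] at he'
    exact absurd (Finset.mem_singleton.mp he') hne

lemma sub_single_add {N : ℕ} (e : Fin N →₀ ℕ) (k : Fin N) (c : ℕ) (h : c ≤ e k) :
    e - Finsupp.single k c + Finsupp.single k c = e := by
  ext i
  rw [Finsupp.add_apply, Finsupp.tsub_apply]
  rcases eq_or_ne i k with rfl | hik
  · simp only [Finsupp.single_eq_same]
    omega
  · rw [Finsupp.single_apply, if_neg (fun hh => hik hh.symm)]
    omega

lemma sum_Iio_succ {N : ℕ} (φ : Fin (N + 1) → ℕ) (j : Fin N) :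
    ∑ q ∈ Finset.Iio j.succ, φ q = φ 0 + ∑ q ∈ Finset.Iio j, φ q.succ := by
  have hins : Finset.Iio j.succ = insert 0 ((Finset.Iio j).image Fin.succ) := by
    ext q
    simp only [Finset.mem_Iio, Finset.mem_insert, Finset.mem_image]
    constructor
    · intro hq
      rcases Fin.eq_zero_or_eq_succ q with rfl | ⟨q', rfl⟩
      · exact Or.inl rfl
      · exact Or.inr ⟨q', by simpa [Finset.mem_Iio, Fin.succ_lt_succ_iff] using hq, rfl⟩
    · rintro (rfl | ⟨q', hq', rfl⟩)
      · exact Fin.succ_pos j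
      · rw [Fin.succ_lt_succ_iff]
        simpa [Finset.mem_Iio] using hq'
  rw [hins, Finset.sum_insert (by simp [Fin.succ_ne_zero]),
    Finset.sum_image (fun x _ y _ h => Fin.succ_injective N h)]

lemma Iio_zero_fin {N : ℕ} : (Finset.Iio (0 : Fin (N + 1))) = ∅ := by
  ext q
  simp

lemma main [CharZero F] (N : ℕ) : ∀ (c : ℕ) (d : Fin N → ℕ) (e : Fin N →₀ ℕ) (i : Fin N),
    c + ∑ q ∈ Finset.Iio i, d q ≤ 2 * ∑ q ∈ Finset.Iio i, e q + e i →
    ∃ f ∈ Ideal.span ({f | ∃ j : Fin N, f = X j ^ (d j + 1)} ∪ {(∑ j : Fin N, X j) ^ c} :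
      Set (MvPolynomial (Fin N) F)), f ≠ 0 ∧ IsLexLead f e := by
  induction N with
  | zero => intro c d e i h; exact i.elim0
  | succ N IH =>
    intro c d e i h
    by_cases hca : c ≤ e 0
    · -- the case `c ≤ e 0` : use `x^(e - c δ₀) * s^c`
      obtain ⟨P, Q, γ, hγ, hPmem, hPeq, hQ⟩ := P_package (F := F) (N := N) (d 0 + 1) c c 0 {c}
        (by simp) (by intro j hj; simp at hj; omega)
        (by intro j hj; simp only [Finset.mem_singleton] at hj; subst hj; exact Or.inl le_rfl)
      rw [pow_zero, mul_one] at hPeq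
      have hPlead : IsLexLead P (Finsupp.single 0 c) := by
        rw [hPeq]
        apply isLexLead_add_small
        · rw [X_pow_eq_monomial, C_mul_monomial, mul_one]
          exact isLexLead_monomial' _ hγ
        · intro m hm
          apply lexLt_zero_coord
          rw [Finsupp.single_eq_same]
          exact hQ m hm
      have hlead : IsLexLead (monomial (e - Finsupp.single 0 c) 1 * P) e := by
        have := isLexLead_monomial_mul (e - Finsupp.single 0 c) hPlead
        rwa [sub_single_add e 0 c hca] at this
      refine ⟨monomial (e - Finsupp.single 0 c) 1 * P, ?_, isLexLead_ne_zero hlead, hlead⟩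
      apply Ideal.mul_mem_left
      refine Ideal.span_le.mpr ?_ hPmem
      intro x hx
      simp only [Set.mem_insert_iff, Set.mem_singleton_iff] at hx
      rcases hx with rfl | rfl
      · exact Ideal.subset_span (Or.inl ⟨0, rfl⟩)
      · exact Ideal.subset_span (Or.inr rfl)
    · push_neg at hca
      rcases Fin.eq_zero_or_eq_succ i with rfl | ⟨j, rfl⟩
      · exfalso
        rw [Iio_zero_fin] at h
        simp at h
        omega
      · by_cases hAa : d 0 + 1 ≤ e 0
        · -- `e 0 ≥ d 0 + 1` : the monomial itself is in the ideal
          have hlead := isLexLead_monomial (F := F) e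
          refine ⟨monomial e 1, ?_, isLexLead_ne_zero hlead, hlead⟩
          have hrw : (monomial e (1 : F))
              = monomial (e - Finsupp.single 0 (d 0 + 1)) 1 * X 0 ^ (d 0 + 1) := by
            rw [X_pow_eq_monomial, monomial_mul, mul_one, sub_single_add e 0 (d 0 + 1) hAa]
          rw [hrw]
          exact Ideal.mul_mem_left _ _ (Ideal.subset_span (Or.inl ⟨0, rfl⟩))
        · -- main induction step
          have hAa' : e 0 ≤ d 0 := by omega
          have hIH : (c + d 0 - 2 * e 0) + ∑ q ∈ Finset.Iio j, d q.succ
              ≤ 2 * ∑ q ∈ Finset.Iio j, (tail e) q + (tail e) j := by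
            rw [sum_Iio_succ d j, sum_Iio_succ (fun q => e q) j] at h
            have hte : ∑ q ∈ Finset.Iio j, (tail e) q = ∑ q ∈ Finset.Iio j, e q.succ :=
              Finset.sum_congr rfl fun q _ => tail_apply e q
            rw [hte, tail_apply]
            omega
          obtain ⟨g, hgJ, hg0, hglead⟩ := IH (c + d 0 - 2 * e 0) (fun q => d q.succ) (tail e) j hIH
          rw [Set.union_singleton] at hgJ
          obtain ⟨hh, g₂, hg₂, hgdec⟩ := Ideal.mem_span_insert.mp hgJ
          have hdisj : Disjoint (Finset.Iio (c - e 0))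
              (Finset.Icc c (c + ((c + d 0 - 2 * e 0) - (c - e 0)))) := by
            rw [Finset.disjoint_left]
            intro x hx hx2
            rw [Finset.mem_Iio] at hx
            rw [Finset.mem_Icc] at hx2
            omega
          have hVcard : (Finset.Iio (c - e 0)
              ∪ Finset.Icc c (c + ((c + d 0 - 2 * e 0) - (c - e 0)))).card
              = (c + d 0 - 2 * e 0) + 1 := by
            rw [Finset.card_union_of_disjoint hdisj, Nat.card_Iio, Nat.card_Icc]
            omega
          have hVle : ∀ x ∈ Finset.Iio (c - e 0)
              ∪ Finset.Icc c (c + ((c + d 0 - 2 * e 0) - (c - e 0))),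
              x ≤ e 0 + (c + d 0 - 2 * e 0) := by
            intro x hx
            rw [Finset.mem_union, Finset.mem_Iio, Finset.mem_Icc] at hx
            omega
          have hVU : ∀ x ∈ Finset.Iio (c - e 0)
              ∪ Finset.Icc c (c + ((c + d 0 - 2 * e 0) - (c - e 0))),
              c ≤ x ∨ x + (d 0 + 1) ≤ e 0 + (c + d 0 - 2 * e 0) := by
            intro x hx
            rw [Finset.mem_union, Finset.mem_Iio, Finset.mem_Icc] at hx
            rcases hx with hx | hx
            · right; omega
            · left; omega
          obtain ⟨P, Q, γ, hγ, hPmem, hPeq, hQsupp⟩ :=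
            P_package (F := F) (N := N) (d 0 + 1) c (e 0) (c + d 0 - 2 * e 0) _ hVcard hVle hVU
          have hfeq : P * rename Fin.succ hh + C γ * (X 0 ^ (e 0) * rename Fin.succ g₂)
              = C γ * (X 0 ^ (e 0) * rename Fin.succ g) + Q * rename Fin.succ hh := by
            rw [hPeq, hgdec, map_add, map_mul, map_pow]
            ring
          have hlead : IsLexLead
              (P * rename Fin.succ hh + C γ * (X 0 ^ (e 0) * rename Fin.succ g₂)) e := by
            rw [hfeq]
            have := final_assemble hγ hglead (Q := Q * rename Fin.succ hh) (support_mul_emb (hh := hh) hQsupp)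
            rwa [← eq_single_add_push e] at this
          refine ⟨_, ?_, isLexLead_ne_zero hlead, hlead⟩
          apply Ideal.add_mem
          · apply Ideal.mul_mem_right
            refine Ideal.span_le.mpr ?_ hPmem
            intro x hx
            simp only [Set.mem_insert_iff, Set.mem_singleton_iff] at hx
            rcases hx with rfl | rfl
            · exact Ideal.subset_span (Or.inl ⟨0, rfl⟩)
            · exact Ideal.subset_span (Or.inr rfl)
          · apply Ideal.mul_mem_left
            apply Ideal.mul_mem_left
            have h1 : rename Fin.succ g₂
                ∈ Ideal.map (rename (R := F) Fin.succ)
                  (Ideal.span {f | ∃ j' : Fin N, f = X j' ^ (d j'.succ + 1)}) :=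
              Ideal.mem_map_of_mem _ hg₂
            rw [Ideal.map_span] at h1
            refine Ideal.span_le.mpr ?_ h1
            rintro x ⟨y, ⟨j', rfl⟩, rfl⟩
            apply Ideal.subset_span
            left
            exact ⟨j'.succ, by rw [map_pow, rename_X]⟩

end OneRowAux

/-- If a monomial `x₁^{e₁} ⋯ xₙ^{eₙ}` satisfies
`2e₁ + ⋯ + 2e_{i-1} + e_i > d₁ + ⋯ + d_{i-1}` for some `i`, then some nonzero
`f ∈ I_𝐝 = (x₁^{d₁+1},…,xₙ^{dₙ+1}, x₁+⋯+xₙ)` has lex-leading monomial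
`x₁^{e₁} ⋯ xₙ^{eₙ}`. -/
theorem exists_mem_oneRowIdeal_with_lexLead
    {n : ℕ} (F : Type*) [Field F] [CharZero F]
    (d : Fin n → ℕ) (I : Ideal (MvPolynomial (Fin n) F))
    (hI : I = Ideal.span ({f | ∃ i : Fin n, f = X i ^ (d i + 1)} ∪
        {∑ i : Fin n, X i}))
    (e : Fin n →₀ ℕ) (i : Fin n)
    (h : ∑ q ∈ Finset.Iio i, d q <
      2 * ∑ q ∈ Finset.Iio i, e q + e i) :
    ∃ f ∈ I, f ≠ 0 ∧ IsLexLead f e := by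
  subst hI
  obtain ⟨f, hf, h0, hl⟩ := OneRowAux.main (F := F) n 1 d e i (by omega)
  rw [pow_one] at hf
  exact ⟨f, hf, h0, hl⟩
end

section
/- Let $\mathbf{x}_{k\times p}$ be a $k \times p$ matrix of variables, $\beta$ a weak composition with $p$ parts, and $I^{\mathrm{rowsum}}_\beta \subseteq \mathbb{F}[\mathbf{x}_{k\times p}]$ the ideal generated by all row sums $x_{i,1}+\cdots+x_{i,p}$ ($1 \le i \le k$) and all monomials $x_{1,j}^{b_1}\cdots x_{k,j}^{b_k}$ with $b_1+\cdots+b_k > \beta_j$ ($1 \le j \le p$). Then for any row indices $1 \le i_0, i_1 \le k$, the row polarization operator $\rho_{i_1 \to i_0}(f) = \sum_{j=1}^p x_{i_0,j} \, \partial f/\partial x_{i_1,j}$ maps $I^{\mathrm{rowsum}}_\beta$ into itself. -/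
open MvPolynomial

/-- The row polarization operator `ρ_{i₁ → i₀}`. -/
noncomputable def rowPolarization {k p : ℕ} {F : Type*} [Field F]
    (i₁ i₀ : Fin k) (f : MvPolynomial (Fin k × Fin p) F) :
    MvPolynomial (Fin k × Fin p) F :=
  ∑ j : Fin p, X (i₀, j) * pderiv (i₁, j) f

/-- The row sum ideal `I^rowsum_β`: generated by all row sums
`x_{i,1} + ⋯ + x_{i,p}` and all monomials `x_{1,j}^{b₁} ⋯ x_{k,j}^{b_k}`
in the variables of a single column `j` with `b₁ + ⋯ + b_k > β_j`. -/
noncomputable def rowSumIdeal {k p : ℕ} (F : Type*) [Field F] (β : Fin p → ℕ) :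
    Ideal (MvPolynomial (Fin k × Fin p) F) :=
  Ideal.span ({f | ∃ i : Fin k, f = ∑ j : Fin p, X (i, j)} ∪
    {f | ∃ j : Fin p, ∃ b : Fin k → ℕ, β j < ∑ i, b i ∧
      f = ∏ i : Fin k, X (i, j) ^ b i})

lemma rp_add {k p : ℕ} {F : Type*} [Field F] (i₁ i₀ : Fin k)
    (a b : MvPolynomial (Fin k × Fin p) F) :
    rowPolarization i₁ i₀ (a + b) = rowPolarization i₁ i₀ a + rowPolarization i₁ i₀ b := by
  simp [rowPolarization, mul_add, Finset.sum_add_distrib]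

lemma rp_mul {k p : ℕ} {F : Type*} [Field F] (i₁ i₀ : Fin k)
    (a b : MvPolynomial (Fin k × Fin p) F) :
    rowPolarization i₁ i₀ (a * b) = a * rowPolarization i₁ i₀ b + rowPolarization i₁ i₀ a * b := by
  unfold rowPolarization
  simp only [pderiv_mul, mul_add]
  rw [Finset.sum_add_distrib, Finset.mul_sum, Finset.sum_mul, add_comm]
  congr 1
  · exact Finset.sum_congr rfl fun j _ => by ring
  · exact Finset.sum_congr rfl fun j _ => by ring

lemma sumSingle_apply {k p : ℕ} (b : Fin k → ℕ) (j : Fin p) (q : Fin k × Fin p) :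
    (∑ i : Fin k, Finsupp.single (i, j) (b i)) q = if q.2 = j then b q.1 else 0 := by
  classical
  obtain ⟨i', j'⟩ := q
  rw [Finsupp.finset_sum_apply]
  simp only [Finsupp.single_apply, Prod.mk.injEq]
  by_cases h : j' = j
  · subst h
    simp
  · simp [fun i => show ¬(i = i' ∧ j = j') from fun ⟨_, hj⟩ => h hj.symm, h]


/-- Row polarization operators map the row sum ideal into itself. -/
theorem rowPolarization_mem_rowSumIdeal
    {k p : ℕ} (F : Type*) [Field F] [CharZero F] (β : Fin p → ℕ)
    (i₁ i₀ : Fin k) :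
    ∀ f ∈ rowSumIdeal F β, rowPolarization i₁ i₀ f ∈ rowSumIdeal (k := k) F β := by
  classical
  intro f hf
  unfold rowSumIdeal at hf ⊢
  refine Submodule.span_induction ?_ ?_ ?_ ?_ hf
  · intro x hx
    rcases hx with ⟨i, rfl⟩ | ⟨j, b, hb, rfl⟩
    · by_cases h : i = i₁
      · rw [h]
        have key : rowPolarization i₁ i₀ (∑ j : Fin p, X (i₁, j)) =
            ∑ j : Fin p, (X (i₀, j) : MvPolynomial (Fin k × Fin p) F) := by
          unfold rowPolarization
          refine Finset.sum_congr rfl fun j _ => ?_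
          rw [map_sum]
          have : ∀ j' : Fin p, (pderiv ((i₁, j) : Fin k × Fin p)
              (X (i₁, j') : MvPolynomial (Fin k × Fin p) F)) =
              if j' = j then 1 else 0 := by
            intro j'
            by_cases h' : j' = j
            · subst h'; simp
            · rw [pderiv_X_of_ne (by simp [h']), if_neg h']
          simp [this]
        rw [key]
        apply Ideal.subset_span
        exact Set.mem_union_left _ ⟨i₀, rfl⟩
      · have key : rowPolarization i₁ i₀ (∑ j : Fin p, (X (i, j) : MvPolynomial (Fin k × Fin p) F)) = 0 := by
          unfold rowPolarization
          refine Finset.sum_eq_zero fun j _ => ?_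
          rw [map_sum]
          have : ∀ j' : Fin p, (pderiv ((i₁, j) : Fin k × Fin p)
              (X (i, j') : MvPolynomial (Fin k × Fin p) F)) = 0 := fun j' =>
            pderiv_X_of_ne (by simp [h])
          simp [this]
        rw [key]
        exact Ideal.zero_mem _
    · -- monomial generator
      set s : (Fin k × Fin p) →₀ ℕ := ∑ i : Fin k, Finsupp.single (i, j) (b i) with hs
      have hxmon : (∏ i : Fin k, (X (i, j) : MvPolynomial (Fin k × Fin p) F) ^ b i)
          = monomial s 1 := by
        rw [hs, monomial_sum_one]
        exact Finset.prod_congr rfl fun i _ => X_pow_eq_monomial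
      have hsval : ∀ q, s q = if q.2 = j then b q.1 else 0 := sumSingle_apply b j
      have key : rowPolarization i₁ i₀ ((monomial s (1 : F)))
          = X (i₀, j) * monomial (s - Finsupp.single (i₁, j) 1) ((b i₁ : F)) := by
        unfold rowPolarization
        rw [Finset.sum_eq_single j]
        · rw [pderiv_monomial]
          congr 1
          rw [hsval (i₁, j)]
          simp
        · intro j' _ hj'
          rw [pderiv_monomial, hsval (i₁, j')]
          simp [hj']
        · simp
      rw [hxmon, key]
      rcases Nat.eq_zero_or_pos (b i₁) with h0 | hpos
      · rw [h0]
        simp only [Nat.cast_zero, monomial_zero, mul_zero]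
        exact Ideal.zero_mem _
      · set b' : Fin k → ℕ := fun i => (b i - if i = i₁ then 1 else 0) + if i = i₀ then 1 else 0
          with hb'def
        have hptw : ∀ i, b' i + (if i = i₁ then 1 else 0) = b i + (if i = i₀ then 1 else 0) := by
          intro i
          simp only [hb'def]
          by_cases h1 : i = i₁
          · subst h1
            split_ifs <;> omega
          · simp only [if_neg h1]
            split_ifs <;> omega
        have hsum : ∑ i, b' i = ∑ i, b i := by
          have h1 : ∑ i, (b' i + if i = i₁ then 1 else 0)
              = ∑ i, (b i + if i = i₀ then 1 else 0) :=
            Finset.sum_congr rfl fun i _ => hptw i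
          simp only [Finset.sum_add_distrib] at h1
          have h2 : ∑ i : Fin k, (if i = i₁ then 1 else 0) = 1 := by simp
          have h3 : ∑ i : Fin k, (if i = i₀ then 1 else 0) = 1 := by simp
          omega
        have hb'sum : β j < ∑ i, b' i := hsum ▸ hb
        have hs' : (Finsupp.single ((i₀, j) : Fin k × Fin p) 1 + (s - Finsupp.single (i₁, j) 1))
            = ∑ i : Fin k, Finsupp.single (i, j) (b' i) := by
          ext q
          obtain ⟨i', j'⟩ := q
          rw [Finsupp.add_apply, Finsupp.tsub_apply, Finsupp.single_apply, Finsupp.single_apply,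
            sumSingle_apply, sumSingle_apply]
          by_cases hj : j' = j
          · subst hj
            simp only [Prod.mk.injEq, eq_self_iff_true, and_true, if_true, hb'def]
            have hbp : 0 < b i₁ := hpos
            by_cases h1 : i₁ = i'
            · by_cases h2 : i₀ = i'
              · rw [if_pos h1, if_pos h2, if_pos h1.symm, if_pos h2.symm]
                have : 0 < b i' := h1 ▸ hbp
                omega
              · rw [if_pos h1, if_neg h2, if_pos h1.symm, if_neg (fun hh => h2 hh.symm)]
                have : 0 < b i' := h1 ▸ hbp
                omega
            · by_cases h2 : i₀ = i'
              · rw [if_neg h1, if_pos h2, if_neg (fun hh => h1 hh.symm), if_pos h2.symm]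
                omega
              · rw [if_neg h1, if_neg h2, if_neg (fun hh => h1 hh.symm),
                  if_neg (fun hh => h2 hh.symm)]
                omega
          · simp [Prod.ext_iff, hj]
            exact fun _ h => hj h.symm
        have key2 : X ((i₀, j) : Fin k × Fin p) * monomial (s - Finsupp.single (i₁, j) 1) ((b i₁ : F))
            = C ((b i₁ : F)) * ∏ i : Fin k, X (i, j) ^ b' i := by
          have hx2 : (∏ i : Fin k, (X (i, j) : MvPolynomial (Fin k × Fin p) F) ^ b' i)
              = monomial (∑ i : Fin k, Finsupp.single (i, j) (b' i)) 1 := by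
            rw [monomial_sum_one]
            exact Finset.prod_congr rfl fun i _ => X_pow_eq_monomial
          rw [hx2, C_mul_monomial, mul_one, ← hs', monomial_single_add, pow_one]
        rw [key2]
        exact Ideal.mul_mem_left _ _
          (Ideal.subset_span (Set.mem_union_right _ ⟨j, b', hb'sum, rfl⟩))
  · simp only [rowPolarization, map_zero, mul_zero, Finset.sum_const_zero]
    exact Ideal.zero_mem _
  · intro x y _ _ hx hy
    rw [rp_add]
    exact Ideal.add_mem _ hx hy
  · intro r x hxspan hx
    rw [smul_eq_mul, rp_mul]
    exact Ideal.add_mem _ (Ideal.mul_mem_left _ _ hx) (Ideal.mul_mem_left _ _ hxspan)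
end

section
/- Let $(d_1,\dots,d_n)$ and $(e_1,\dots,e_n)$ be sequences of nonnegative integers with equal sums, satisfying $(e_1,\dots,e_n) \le_{lex} (d_1,\dots,d_n)$. Suppose $1 \le s \le t$ with $d_1 = \cdots = d_t = 0$, and $m \ge 1$. If there exists an $s$-step leftward shift $(e'_1,\dots,e'_n)$ of $(e_1,\dots,e_n)$ of magnitude $m$ with $\mathrm{split}^{\mathrm{left}}_{s,m}(d_1,\dots,d_n) \le_{lex} (e'_1,\dots,e'_n)$, then $(e_1,\dots,e_n) = (d_1,\dots,d_n)$ and $(e'_1,\dots,e'_n) = \mathrm{split}^{\mathrm{left}}_{s,m}(d_1,\dots,d_n)$. -/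
/-- Strict lexicographic order on sequences. -/
def SeqLexLt {n : ℕ} (a b : Fin n → ℕ) : Prop :=
  ∃ i : Fin n, (∀ j < i, a j = b j) ∧ a i < b i

/-- Weak lexicographic order on sequences. -/
def SeqLexLe {n : ℕ} (a b : Fin n → ℕ) : Prop :=
  a = b ∨ SeqLexLt a b

/-- `c` witnesses that `a'` is an `s`-step leftward shift of `a` of magnitude
`m` (relative to the first `t` entries being zero): `c j = 0` for `j < t`,
`0 ≤ c j ≤ a j`, `∑ c = m`, and `a' = a + ∑_j c_j (e_{j-s} - e_j)`, stated
subtraction-free as `a' i + c i = a i + c (i + s)`. -/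
def IsLeftShiftWitness {n : ℕ} (s t m : ℕ) (a a' c : Fin n → ℕ) : Prop :=
  (∀ j : Fin n, (j : ℕ) < t → c j = 0) ∧ (∀ j, c j ≤ a j) ∧ (∑ j, c j = m) ∧
  ∀ i : Fin n, a' i + c i =
    a i + (if h : (i : ℕ) + s < n then c ⟨(i : ℕ) + s, h⟩ else 0)

/-- `a'` is an `s`-step leftward shift of `a` of magnitude `m`. -/
def IsLeftShift {n : ℕ} (s t m : ℕ) (a a' : Fin n → ℕ) : Prop :=
  ∃ c, IsLeftShiftWitness s t m a a' c

/-- `a'` is the leftward split `split^left_{s,m}(a)`: the leftward shift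
obtained by choosing the coefficient sequence `c` lexicographically
maximal. -/
def IsLeftSplit {n : ℕ} (s t m : ℕ) (a a' : Fin n → ℕ) : Prop :=
  ∃ c, IsLeftShiftWitness s t m a a' c ∧
    ∀ c' : Fin n → ℕ,
      ((∀ j : Fin n, (j : ℕ) < t → c' j = 0) ∧ (∀ j, c' j ≤ a j) ∧
        ∑ j, c' j = m) → SeqLexLe c' c

private lemma not_seqLexLe_of {n : ℕ} (a b : Fin n → ℕ) (i : Fin n)
    (h1 : ∀ j < i, a j = b j) (h2 : b i < a i) : ¬ SeqLexLe a b := by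
  rintro (rfl | ⟨k, hk, hlt⟩)
  · omega
  · rcases lt_trichotomy k i with h | h | h
    · have := h1 k h; omega
    · subst h; omega
    · have := hk i h; omega

private lemma exists_first_diff {n : ℕ} {a b : Fin n → ℕ} (h : a ≠ b) :
    ∃ i : Fin n, (∀ j < i, a j = b j) ∧ a i ≠ b i := by
  classical
  obtain ⟨i0, hi0⟩ := Function.ne_iff.mp h
  have hP : ∃ k, ∃ hk : k < n, a ⟨k, hk⟩ ≠ b ⟨k, hk⟩ := ⟨i0, i0.2, by simpa using hi0⟩
  obtain ⟨hk, hne⟩ := Nat.find_spec hP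
  refine ⟨⟨Nat.find hP, hk⟩, ?_, hne⟩
  intro j hj
  by_contra hjne
  exact Nat.find_min hP (show (j : ℕ) < Nat.find hP from hj) ⟨j.2, by simpa using hjne⟩

private lemma sum_lt_of_first {n : ℕ} (f g : Fin n → ℕ) (i : Fin n)
    (h1 : ∀ j < i, f j = g j) (h2 : f i < g i) (h3 : ∀ j, i < j → f j = 0) :
    ∑ j, f j < ∑ j, g j := by
  have e1 : ∑ j, f j = ∑ j ∈ Finset.Iic i, f j := by
    refine (Finset.sum_subset (Finset.subset_univ _) ?_).symm
    intro x _ hx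
    exact h3 x (lt_of_not_ge (by simpa using hx))
  have e2 : ∑ j ∈ Finset.Iic i, f j < ∑ j ∈ Finset.Iic i, g j := by
    refine Finset.sum_lt_sum ?_ ⟨i, Finset.mem_Iic.mpr le_rfl, h2⟩
    intro k hk
    rcases lt_or_eq_of_le (Finset.mem_Iic.mp hk) with h | h
    · exact le_of_eq (h1 k h)
    · subst h; exact le_of_lt h2
  have e3 : ∑ j ∈ Finset.Iic i, g j ≤ ∑ j, g j :=
    Finset.sum_le_sum_of_subset (Finset.subset_univ _)
  omega

/-- If `e ≤ₗₑₓ d`, the first `t` entries of `d` vanish, `1 ≤ s ≤ t`, `m ≥ 1`,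
and some `s`-step leftward shift `e'` of `e` of magnitude `m` satisfies
`split^left_{s,m}(d) ≤ₗₑₓ e'`, then `e = d` and
`e' = split^left_{s,m}(d)`. -/
theorem leftSplit_lex_rigidity
    {n : ℕ} (s t m : ℕ) (hs : 1 ≤ s) (hst : s ≤ t) (hm : 1 ≤ m)
    (d e : Fin n → ℕ) (hsum : ∑ i, d i = ∑ i, e i)
    (hd0 : ∀ j : Fin n, (j : ℕ) < t → d j = 0)
    (hlex : SeqLexLe e d)
    (e' : Fin n → ℕ) (he' : IsLeftShift s t m e e')
    (dsplit : Fin n → ℕ) (hdsplit : IsLeftSplit s t m d dsplit)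
    (hle : SeqLexLe dsplit e') :
    e = d ∧ e' = dsplit := by
  classical
  obtain ⟨c, hc0, hcle, hcsum, hceq⟩ := he'
  obtain ⟨b, ⟨hb0, hble, hbsum, hbeq⟩, hmax⟩ := hdsplit
  -- greedy property of the lex-maximal witness `b`
  have hG : ∀ j j' : Fin n, j < j' → b j < d j → b j' = 0 := by
    intro j j' hjj' hbd
    by_contra hne
    have hjne : j ≠ j' := ne_of_lt hjj'
    set b'' : Fin n → ℕ :=
      fun k => b k + (if k = j then 1 else 0) - (if k = j' then 1 else 0) with hb''def
    have hb''j : b'' j = b j + 1 := by simp [hb''def, hjne]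
    have hb''j' : b'' j' = b j' - 1 := by simp [hb''def, Ne.symm hjne]
    have hb''eq : ∀ k, k ≠ j → k ≠ j' → b'' k = b k := by
      intro k h1 h2; simp [hb''def, h1, h2]
    have hkey : ∀ k, b'' k + (if k = j' then 1 else 0) = b k + (if k = j then 1 else 0) := by
      intro k
      by_cases h1 : k = j
      · subst h1; simp [hb''j, hjne]
      · by_cases h2 : k = j'
        · subst h2; simp [hb''j', h1]; omega
        · simp [hb''eq k h1 h2, h1, h2]
    have hsum'' : ∑ k, b'' k = m := by
      have h2 : ∑ k, (b'' k + (if k = j' then 1 else 0))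
          = ∑ k, (b k + (if k = j then 1 else 0)) :=
        Finset.sum_congr rfl fun k _ => hkey k
      rw [Finset.sum_add_distrib, Finset.sum_add_distrib] at h2
      simp [Finset.sum_ite_eq'] at h2
      omega
    have hwit : (∀ k : Fin n, (k : ℕ) < t → b'' k = 0) ∧ (∀ k, b'' k ≤ d k) ∧
        ∑ k, b'' k = m := by
      refine ⟨?_, ?_, hsum''⟩
      · intro k hk
        have h1 : k ≠ j := by rintro rfl; have := hd0 k hk; omega
        have h2 : k ≠ j' := by rintro rfl; exact hne (hb0 k hk)
        rw [hb''eq k h1 h2]; exact hb0 k hk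
      · intro k
        by_cases h1 : k = j
        · subst h1; rw [hb''j]; omega
        · by_cases h2 : k = j'
          · subst h2; rw [hb''j']; have := hble k; omega
          · rw [hb''eq k h1 h2]; exact hble k
    exact not_seqLexLe_of b'' b j
      (fun k hk => hb''eq k (ne_of_lt hk) (ne_of_lt (lt_trans hk hjj')))
      (by rw [hb''j]; omega) (hmax b'' hwit)
  -- pointwise transfer of equalities
  have hpt : ∀ i : Fin n, e i = d i → c i = b i →
      (∀ h : (i : ℕ) + s < n, c ⟨(i : ℕ) + s, h⟩ = b ⟨(i : ℕ) + s, h⟩) →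
      e' i = dsplit i := by
    intro i h1 h2 h3
    have hcq := hceq i
    have hbq := hbeq i
    by_cases h : (i : ℕ) + s < n
    · rw [dif_pos h] at hcq hbq; have := h3 h; omega
    · rw [dif_neg h] at hcq hbq; omega
  rcases hlex with heq | ⟨i₀, hpre, hlt⟩
  · -- case e = d
    subst heq
    rcases hmax c ⟨hc0, hcle, hcsum⟩ with hcb | ⟨j, hj, hjlt⟩
    · subst hcb
      exact ⟨rfl, funext fun i => hpt i rfl rfl fun _ => rfl⟩
    · exfalso
      have hjn : (j : ℕ) < n := j.2
      have hjt : t ≤ (j : ℕ) := by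
        by_contra h
        have := hb0 j (by omega)
        omega
      have hsj : s ≤ (j : ℕ) := le_trans hst hjt
      have hi₁n : (j : ℕ) - s < n := by omega
      set i₁ : Fin n := ⟨(j : ℕ) - s, hi₁n⟩ with hi₁def
      have hv : (i₁ : ℕ) = (j : ℕ) - s := rfl
      have hsn : (i₁ : ℕ) + s < n := by omega
      refine absurd hle (not_seqLexLe_of dsplit e' i₁ ?_ ?_)
      · intro i hi
        have hiv : (i : ℕ) < (j : ℕ) - s := hi
        refine (hpt i rfl (hj i ?_) ?_).symm
        · rw [Fin.lt_def]; omega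
        · intro h
          exact hj ⟨(i : ℕ) + s, h⟩ (by rw [Fin.lt_def]; simp; omega)
      · have hcq := hceq i₁
        have hbq := hbeq i₁
        rw [dif_pos hsn] at hcq hbq
        have hkj : (⟨(i₁ : ℕ) + s, hsn⟩ : Fin n) = j := Fin.ext (show (i₁ : ℕ) + s = (j : ℕ) by omega)
        rw [hkj] at hcq hbq
        have hci₁ : c i₁ = b i₁ := hj i₁ (by rw [Fin.lt_def]; omega)
        omega
  · -- case e <lex d at i₀
    exfalso
    have hi₀n : (i₀ : ℕ) < n := i₀.2
    have hi₀t : t ≤ (i₀ : ℕ) := by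
      by_contra h
      have := hd0 i₀ (by omega)
      omega
    by_cases hbc : c = b
    · subst hbc
      refine absurd hle (not_seqLexLe_of dsplit e' i₀ ?_ ?_)
      · intro i hi
        exact (hpt i (hpre i hi) rfl fun _ => rfl).symm
      · have hcq := hceq i₀
        have hbq := hbeq i₀
        by_cases h : (i₀ : ℕ) + s < n
        · rw [dif_pos h] at hcq hbq; omega
        · rw [dif_neg h] at hcq hbq; omega
    · obtain ⟨j, hj, hjne⟩ := exists_first_diff hbc
      have hjn : (j : ℕ) < n := j.2
      have hcjbj : c j < b j := by
        rcases Nat.lt_or_ge (c j) (b j) with h | h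
        · exact h
        have h' : b j < c j := by omega
        exfalso
        have hbd : ∃ i₂ : Fin n, i₂ ≤ j ∧ b i₂ < d i₂ := by
          rcases le_or_gt j i₀ with hji | hij
          · refine ⟨j, le_rfl, ?_⟩
            have hej : e j ≤ d j := by
              rcases lt_or_eq_of_le hji with h1 | h1
              · exact le_of_eq (hpre j h1)
              · exact h1 ▸ le_of_lt hlt
            have := hcle j; omega
          · refine ⟨i₀, le_of_lt hij, ?_⟩
            have h1 := hj i₀ hij
            have h2 := hcle i₀
            omega
        obtain ⟨i₂, hi₂j, hbdi⟩ := hbd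
        have hzero : ∀ k, j < k → b k = 0 := fun k hk =>
          hG i₂ k (lt_of_le_of_lt hi₂j hk) hbdi
        have := sum_lt_of_first b c j (fun k hk => (hj k hk).symm) h' hzero
        omega
      have hjt : t ≤ (j : ℕ) := by
        by_contra hh
        have := hb0 j (by omega)
        omega
      have hsj : s ≤ (j : ℕ) := le_trans hst hjt
      have hi₁n : min (i₀ : ℕ) ((j : ℕ) - s) < n := by omega
      set i₁ : Fin n := ⟨min (i₀ : ℕ) ((j : ℕ) - s), hi₁n⟩ with hi₁def
      have hv : (i₁ : ℕ) = min (i₀ : ℕ) ((j : ℕ) - s) := rfl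
      have hsn : (i₁ : ℕ) + s < n := by omega
      refine absurd hle (not_seqLexLe_of dsplit e' i₁ ?_ ?_)
      · intro i hi
        have hiv : (i : ℕ) < min (i₀ : ℕ) ((j : ℕ) - s) := hi
        refine (hpt i (hpre i ?_) (hj i ?_) ?_).symm
        · rw [Fin.lt_def]; omega
        · rw [Fin.lt_def]; omega
        · intro h
          exact hj ⟨(i : ℕ) + s, h⟩ (by rw [Fin.lt_def]; simp; omega)
      · have hcq := hceq i₁
        have hbq := hbeq i₁
        rw [dif_pos hsn] at hcq hbq
        have hci₁ : c i₁ = b i₁ := hj i₁ (by rw [Fin.lt_def]; omega)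
        rcases Nat.lt_or_ge (i₁ : ℕ) (i₀ : ℕ) with h1 | h1
        · -- i₁ = j - s < i₀ : shift index equals j
          have hkj : (⟨(i₁ : ℕ) + s, hsn⟩ : Fin n) = j := Fin.ext (show (i₁ : ℕ) + s = (j : ℕ) by omega)
          rw [hkj] at hcq hbq
          have hed : e i₁ = d i₁ := hpre i₁ (by rw [Fin.lt_def]; exact h1)
          omega
        · -- i₁ = i₀
          have hi₁i₀ : i₁ = i₀ := Fin.ext (by omega)
          have hed : e i₁ < d i₁ := hi₁i₀ ▸ hlt
          have hk : c ⟨(i₁ : ℕ) + s, hsn⟩ ≤ b ⟨(i₁ : ℕ) + s, hsn⟩ := by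
            rcases Nat.lt_or_ge ((i₁ : ℕ) + s) (j : ℕ) with h3 | h3
            · exact le_of_eq (hj _ (by rw [Fin.lt_def]; exact h3))
            · have hkj : (⟨(i₁ : ℕ) + s, hsn⟩ : Fin n) = j := Fin.ext (show (i₁ : ℕ) + s = (j : ℕ) by omega)
              rw [hkj]; omega
          omega
end

section
/- Let $r, s > 0$, let $\mathbf{z}_{r\times s}$ be an $r \times s$ matrix of variables, and let $J_{r,s} \subseteq \mathbb{F}[\mathbf{z}_{r\times s}]$ be the ideal generated by all products $z_{i,j} z_{i,j'}$ and $z_{i,j} z_{i',j}$ of two variables in the same row or same column. Then the invariant subalgebra $(\mathbb{F}[\mathbf{z}_{r\times s}]/J_{r,s})^{\mathfrak{S}_r \times \mathfrak{S}_s}$ is generated as an $\mathbb{F}$-algebra by the single coset $\Sigma + J_{r,s}$, where $\Sigma = \sum_{i=1}^r \sum_{j=1}^s z_{i,j}$. -/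
open MvPolynomial

namespace SqfAux

set_option linter.unusedSectionVars false
variable {r s : ℕ} {F : Type*} [Field F] [CharZero F]

/-- The generating set of the ideal `J_{r,s}`. -/
def genSet (r s : ℕ) (F : Type*) [Field F] : Set (MvPolynomial (Fin r × Fin s) F) :=
  {f | ∃ (i : Fin r) (j j' : Fin s), f = X (i, j) * X (i, j')} ∪
  {f | ∃ (i i' : Fin r) (j : Fin s), f = X (i, j) * X (i', j)}

lemma rename_mem_span (σ : Equiv.Perm (Fin r)) (τ : Equiv.Perm (Fin s))
    {f : MvPolynomial (Fin r × Fin s) F} (hf : f ∈ Ideal.span (genSet r s F)) :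
    rename (Prod.map ⇑σ ⇑τ) f ∈ Ideal.span (genSet r s F) := by
  have hmap : Ideal.map (rename (Prod.map ⇑σ ⇑τ) : MvPolynomial (Fin r × Fin s) F →ₐ[F] _)
      (Ideal.span (genSet r s F)) ≤ Ideal.span (genSet r s F) := by
    rw [Ideal.map_span, Ideal.span_le]
    rintro _ ⟨g, hg, rfl⟩
    apply Ideal.subset_span
    rcases hg with ⟨i, j, j', rfl⟩ | ⟨i, i', j, rfl⟩
    · exact Or.inl ⟨σ i, τ j, τ j', by simp⟩
    · exact Or.inr ⟨σ i, σ i', τ j, by simp⟩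
  exact hmap (Ideal.mem_map_of_mem _ hf)

lemma rename_sigma (σ : Equiv.Perm (Fin r)) (τ : Equiv.Perm (Fin s)) :
    rename (Prod.map ⇑σ ⇑τ)
        (∑ i : Fin r, ∑ j : Fin s, (X (i, j) : MvPolynomial (Fin r × Fin s) F)) =
      ∑ i : Fin r, ∑ j : Fin s, X (i, j) := by
  simp only [map_sum, rename_X, Prod.map_apply]
  conv_rhs => rw [← Equiv.sum_comp σ
    (fun i => ∑ j : Fin s, (X (i, j) : MvPolynomial (Fin r × Fin s) F))]
  refine Finset.sum_congr rfl fun i _ => ?_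
  conv_rhs => rw [← Equiv.sum_comp τ (fun j => (X (σ i, j) : MvPolynomial (Fin r × Fin s) F))]

/-- a tuple of positions with pairwise distinct rows and pairwise distinct columns -/
def IsGood {k : ℕ} (g : Fin k → Fin r × Fin s) : Prop :=
  Function.Injective (fun i => (g i).1) ∧ Function.Injective (fun i => (g i).2)

lemma prod_bad_mem {k : ℕ} {g : Fin k → Fin r × Fin s} {i j : Fin k} (hij : i ≠ j)
    (h : (g i).1 = (g j).1 ∨ (g i).2 = (g j).2) :
    (∏ l, (X (g l) : MvPolynomial (Fin r × Fin s) F)) ∈ Ideal.span (genSet r s F) := by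
  classical
  have hj : j ∈ Finset.univ.erase i := Finset.mem_erase.2 ⟨Ne.symm hij, Finset.mem_univ j⟩
  rw [← Finset.mul_prod_erase Finset.univ _ (Finset.mem_univ i),
      ← Finset.mul_prod_erase _ _ hj, ← mul_assoc]
  refine Ideal.mul_mem_right _ _ (Ideal.subset_span ?_)
  rcases h with h | h
  · refine Or.inl ⟨(g i).1, (g i).2, (g j).2, ?_⟩
    rw [Prod.mk.eta, show ((g i).1, (g j).2) = g j from Prod.ext_iff.2 ⟨h, rfl⟩]
  · refine Or.inr ⟨(g i).1, (g j).1, (g i).2, ?_⟩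
    rw [Prod.mk.eta, show ((g j).1, (g i).2) = g j from Prod.ext_iff.2 ⟨rfl, h⟩]

lemma monomial_bad_mem {d : (Fin r × Fin s) →₀ ℕ}
    (h : (∃ p, 2 ≤ d p) ∨
      ∃ p q, p ∈ d.support ∧ q ∈ d.support ∧ p ≠ q ∧ (p.1 = q.1 ∨ p.2 = q.2)) :
    (monomial d (1 : F)) ∈ Ideal.span (genSet r s F) := by
  classical
  rcases h with ⟨p, hp⟩ | ⟨p, q, hps, hqs, hpq, hrc⟩
  · have hle : Finsupp.single p 2 ≤ d := Finsupp.single_le_iff.2 hp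
    have heq : (monomial d (1 : F)) =
        monomial (Finsupp.single p 2) 1 * monomial (d - Finsupp.single p 2) 1 := by
      rw [monomial_mul, one_mul, add_tsub_cancel_of_le hle]
    rw [heq, ← X_pow_eq_monomial]
    refine Ideal.mul_mem_right _ _ (Ideal.subset_span (Or.inl ⟨p.1, p.2, p.2, ?_⟩))
    rw [pow_two, Prod.mk.eta]
  · have hle : Finsupp.single p 1 + Finsupp.single q 1 ≤ d := by
      rw [Finsupp.le_def]
      intro x
      rcases eq_or_ne x p with rfl | hxp
      · have h1 : 1 ≤ d x := Nat.one_le_iff_ne_zero.2 (Finsupp.mem_support_iff.1 hps)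
        simpa [Finsupp.single_apply, Ne.symm hpq] using h1
      · rcases eq_or_ne x q with rfl | hxq
        · have h1 : 1 ≤ d x := Nat.one_le_iff_ne_zero.2 (Finsupp.mem_support_iff.1 hqs)
          simpa [Finsupp.single_apply, hpq, Ne.symm hxp] using h1
        · simp [Finsupp.single_apply, Ne.symm hxp, Ne.symm hxq]
    have hX : (X p : MvPolynomial (Fin r × Fin s) F) * X q =
        monomial (Finsupp.single p 1 + Finsupp.single q 1) 1 := by
      rw [← pow_one (X p), ← pow_one (X q), X_pow_eq_monomial, X_pow_eq_monomial,
        monomial_mul, one_mul]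
    have heq : (monomial d (1 : F)) =
        (X p * X q) * monomial (d - (Finsupp.single p 1 + Finsupp.single q 1)) 1 := by
      rw [hX, monomial_mul, one_mul, add_tsub_cancel_of_le hle]
    rw [heq]
    refine Ideal.mul_mem_right _ _ (Ideal.subset_span ?_)
    rcases hrc with h | h
    · refine Or.inl ⟨p.1, p.2, q.2, ?_⟩
      rw [Prod.mk.eta, show (p.1, q.2) = q from Prod.ext_iff.2 ⟨h, rfl⟩]
    · refine Or.inr ⟨p.1, q.1, p.2, ?_⟩
      rw [Prod.mk.eta, show (q.1, p.2) = q from Prod.ext_iff.2 ⟨rfl, h⟩]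

lemma exists_perm_extend {α : Type*} [Fintype α] [DecidableEq α] {k : ℕ} {a b : Fin k → α}
    (ha : Function.Injective a) (hb : Function.Injective b) :
    ∃ σ : Equiv.Perm α, ∀ i, σ (a i) = b i := by
  classical
  let e : {x // x ∈ Set.range a} ≃ {x // x ∈ Set.range b} :=
    (Equiv.ofInjective a ha).symm.trans (Equiv.ofInjective b hb)
  refine ⟨e.extendSubtype, fun i => ?_⟩
  rw [e.extendSubtype_apply_of_mem (a i) ⟨i, rfl⟩]
  show ((Equiv.ofInjective b hb) ((Equiv.ofInjective a ha).symm ⟨a i, ⟨i, rfl⟩⟩) : α) = b i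
  rw [Equiv.ofInjective_symm_apply]
  simp

lemma exists_perm_map {k : ℕ} {g g' : Fin k → Fin r × Fin s}
    (hg : IsGood g) (hg' : IsGood g') :
    ∃ (σ : Equiv.Perm (Fin r)) (τ : Equiv.Perm (Fin s)),
      ∀ i, Prod.map ⇑σ ⇑τ (g i) = g' i := by
  obtain ⟨σ, hσ⟩ := exists_perm_extend hg.1 hg'.1
  obtain ⟨τ, hτ⟩ := exists_perm_extend hg.2 hg'.2
  exact ⟨σ, τ, fun i => Prod.ext_iff.2 ⟨hσ i, hτ i⟩⟩

/-- the symmetrization operator -/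
noncomputable def Psi (f : MvPolynomial (Fin r × Fin s) F) :
    MvPolynomial (Fin r × Fin s) F ⧸ Ideal.span (genSet r s F) :=
  ∑ e : Equiv.Perm (Fin r) × Equiv.Perm (Fin s),
    Ideal.Quotient.mk (Ideal.span (genSet r s F)) (rename (Prod.map ⇑e.1 ⇑e.2) f)

lemma Psi_sum {ι : Type*} (t : Finset ι) (h : ι → MvPolynomial (Fin r × Fin s) F) :
    Psi (∑ x ∈ t, h x) = ∑ x ∈ t, Psi (h x) := by
  unfold Psi
  simp only [← Ideal.Quotient.mkₐ_eq_mk (R₁ := F)]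
  simp only [map_sum]
  exact Finset.sum_comm

lemma Psi_smul (c : F) (f : MvPolynomial (Fin r × Fin s) F) :
    Psi (c • f) = c • Psi f := by
  unfold Psi
  simp only [← Ideal.Quotient.mkₐ_eq_mk (R₁ := F)]
  simp only [map_smul, Finset.smul_sum]

lemma Psi_eq_zero {f : MvPolynomial (Fin r × Fin s) F}
    (hf : f ∈ Ideal.span (genSet r s F)) : Psi f = 0 := by
  unfold Psi
  refine Finset.sum_eq_zero fun e _ => ?_
  rw [Ideal.Quotient.eq_zero_iff_mem]
  exact rename_mem_span e.1 e.2 hf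

lemma Psi_good_mem {k : ℕ} {g₀ : Fin k → Fin r × Fin s} (hg₀ : IsGood g₀) :
    Psi (∏ i, (X (g₀ i) : MvPolynomial (Fin r × Fin s) F)) ∈
      Algebra.adjoin F {Ideal.Quotient.mk (Ideal.span (genSet r s F))
        (∑ i : Fin r, ∑ j : Fin s, X (i, j))} := by
  classical
  set Sg : MvPolynomial (Fin r × Fin s) F := ∑ i : Fin r, ∑ j : Fin s, X (i, j) with hSg
  set A := Algebra.adjoin F {Ideal.Quotient.mk (Ideal.span (genSet r s F)) Sg} with hA
  set GF := Finset.univ.filter (fun g : Fin k → Fin r × Fin s => IsGood g) with hGF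
  have hconst : ∀ g : Fin k → Fin r × Fin s, IsGood g →
      Psi (∏ i, (X (g i) : MvPolynomial (Fin r × Fin s) F)) = Psi (∏ i, X (g₀ i)) := by
    intro g hg
    obtain ⟨σ₀, τ₀, h₀⟩ := exists_perm_map hg₀ hg
    have hren : rename (Prod.map ⇑σ₀ ⇑τ₀) (∏ i, (X (g₀ i) : MvPolynomial (Fin r × Fin s) F))
        = ∏ i, X (g i) := by
      rw [map_prod]
      exact Finset.prod_congr rfl fun i _ => by rw [rename_X, h₀ i]
    rw [← hren]
    unfold Psi
    refine Fintype.sum_equiv (Equiv.mulRight (σ₀, τ₀)) _ _ fun e => ?_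
    rw [rename_rename]
    have hcomp : Prod.map ⇑e.1 ⇑e.2 ∘ Prod.map ⇑σ₀ ⇑τ₀ =
        Prod.map ⇑((Equiv.mulRight (σ₀, τ₀) e).1) ⇑((Equiv.mulRight (σ₀, τ₀) e).2) := by
      funext p
      simp [Prod.map, Equiv.Perm.mul_apply]
    rw [hcomp]
  have hbad : ∀ g : Fin k → Fin r × Fin s, ¬ IsGood g →
      Psi (∏ i, (X (g i) : MvPolynomial (Fin r × Fin s) F)) = 0 := by
    intro g hg
    apply Psi_eq_zero
    rw [IsGood, not_and_or] at hg
    rcases hg with hg | hg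
    · rw [Function.not_injective_iff] at hg
      obtain ⟨i, j, hij, hne⟩ := hg
      exact prod_bad_mem hne (Or.inl hij)
    · rw [Function.not_injective_iff] at hg
      obtain ⟨i, j, hij, hne⟩ := hg
      exact prod_bad_mem hne (Or.inr hij)
  have hg₀GF : g₀ ∈ GF := Finset.mem_filter.2 ⟨Finset.mem_univ _, hg₀⟩
  have hcard : 0 < GF.card := Finset.card_pos.2 ⟨g₀, hg₀GF⟩
  have h1 : Psi (Sg ^ k) =
      Fintype.card (Equiv.Perm (Fin r) × Equiv.Perm (Fin s)) •
        ((Ideal.Quotient.mk (Ideal.span (genSet r s F)) Sg) ^ k) := by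
    unfold Psi
    rw [Finset.sum_congr rfl fun e _ => by
      rw [map_pow, hSg, rename_sigma e.1 e.2, map_pow],
      Finset.sum_const, Finset.card_univ]
  have h2 : Psi (Sg ^ k) = GF.card • Psi (∏ i, X (g₀ i)) := by
    have hpow : Sg ^ k = ∑ g : Fin k → Fin r × Fin s, ∏ i, X (g i) := by
      rw [hSg, ← Fintype.sum_prod_type]
      exact Fintype.sum_pow _ k
    rw [hpow, Psi_sum, ← Finset.sum_filter_add_sum_filter_not Finset.univ
      (fun g : Fin k → Fin r × Fin s => IsGood g)]
    rw [Finset.sum_eq_zero (fun g hg => hbad g (Finset.mem_filter.1 hg).2), add_zero]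
    rw [Finset.sum_congr rfl (fun g hg => hconst g (Finset.mem_filter.1 hg).2),
      Finset.sum_const]
  have hSk : (Ideal.Quotient.mk (Ideal.span (genSet r s F)) Sg) ^ k ∈ A :=
    pow_mem (Algebra.self_mem_adjoin_singleton F _) k
  have hc : (GF.card : F) ≠ 0 := Nat.cast_ne_zero.2 hcard.ne'
  have hkey : Psi (∏ i, X (g₀ i)) = (GF.card : F)⁻¹ •
      (((Fintype.card (Equiv.Perm (Fin r) × Equiv.Perm (Fin s)) : ℕ) : F) •
        ((Ideal.Quotient.mk (Ideal.span (genSet r s F)) Sg) ^ k)) := by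
    rw [eq_inv_smul_iff₀ hc, Nat.cast_smul_eq_nsmul, Nat.cast_smul_eq_nsmul]
    rw [← h2, h1]
  rw [hkey]
  exact Subalgebra.smul_mem _ (Subalgebra.smul_mem _ hSk _) _

lemma good_monomial {d : (Fin r × Fin s) →₀ ℕ}
    (h1 : ∀ p, d p ≤ 1)
    (h2 : ∀ p q, p ∈ d.support → q ∈ d.support → p ≠ q → p.1 ≠ q.1 ∧ p.2 ≠ q.2) :
    ∃ (k : ℕ) (g : Fin k → Fin r × Fin s), IsGood g ∧
      monomial d (1 : F) = ∏ i, X (g i) := by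
  classical
  set e : Fin d.support.card ≃ {x // x ∈ d.support} := d.support.equivFin.symm with hedef
  set g : Fin d.support.card → Fin r × Fin s := fun i => (e i : Fin r × Fin s) with hgdef
  have hinj : Function.Injective g := fun i j hij =>
    e.injective (Subtype.ext hij)
  have hmem : ∀ i, g i ∈ d.support := fun i => (e i).2
  refine ⟨d.support.card, g, ⟨?_, ?_⟩, ?_⟩
  · intro i j hij
    by_contra hne
    exact (h2 _ _ (hmem i) (hmem j) (fun h => hne (hinj h))).1 hij
  · intro i j hij
    by_contra hne
    exact (h2 _ _ (hmem i) (hmem j) (fun h => hne (hinj h))).2 hij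
  · rw [← prod_X_pow_eq_monomial]
    have hone : ∀ p ∈ d.support, (X p : MvPolynomial (Fin r × Fin s) F) ^ d p = X p := by
      intro p hp
      have : d p = 1 :=
        le_antisymm (h1 p) (Nat.one_le_iff_ne_zero.2 (Finsupp.mem_support_iff.1 hp))
      rw [this, pow_one]
    rw [Finset.prod_congr rfl hone,
      ← Finset.prod_coe_sort d.support (fun p => (X p : MvPolynomial (Fin r × Fin s) F))]
    exact (Fintype.prod_equiv e _ _ fun i => rfl).symm

lemma Psi_monomial_mem (d : (Fin r × Fin s) →₀ ℕ) :
    Psi (monomial d (1 : F)) ∈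
      Algebra.adjoin F {Ideal.Quotient.mk (Ideal.span (genSet r s F))
        (∑ i : Fin r, ∑ j : Fin s, X (i, j))} := by
  classical
  by_cases hbad : (∃ p, 2 ≤ d p) ∨
      ∃ p q, p ∈ d.support ∧ q ∈ d.support ∧ p ≠ q ∧ (p.1 = q.1 ∨ p.2 = q.2)
  · rw [Psi_eq_zero (monomial_bad_mem hbad)]
    exact Subalgebra.zero_mem _
  · push_neg at hbad
    obtain ⟨hb1, hb2⟩ := hbad
    obtain ⟨k, g, hg, hmon⟩ := good_monomial (F := F)
      (fun p => Nat.lt_succ_iff.1 (hb1 p)) hb2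
    rw [hmon]
    exact Psi_good_mem hg

end SqfAux

set_option maxHeartbeats 1000000 in
set_option synthInstance.maxHeartbeats 200000 in
open SqfAux in
/-- The invariant subalgebra of `𝔽[z_{r×s}]/J_{r,s}` under the row-and-column
permutation action of `𝔖_r × 𝔖_s` is generated as an `𝔽`-algebra by the image
of `Σ = ∑_{i,j} z_{i,j}`. Here `J_{r,s}` is generated by all products of two
variables lying in a common row or common column, and an element of the
quotient is invariant iff the action on any representative fixes its class. -/
theorem invariants_of_squarefree_quotient_generated_by_sum
    (r s : ℕ) (hr : 0 < r) (hs : 0 < s)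
    (F : Type*) [Field F] [CharZero F]
    (J : Ideal (MvPolynomial (Fin r × Fin s) F))
    (hJ : J = Ideal.span
      ({f | ∃ (i : Fin r) (j j' : Fin s), f = X (i, j) * X (i, j')} ∪
       {f | ∃ (i i' : Fin r) (j : Fin s), f = X (i, j) * X (i', j)})) :
    {q : MvPolynomial (Fin r × Fin s) F ⧸ J |
        ∀ f : MvPolynomial (Fin r × Fin s) F, Ideal.Quotient.mk J f = q →
          ∀ (σ : Equiv.Perm (Fin r)) (τ : Equiv.Perm (Fin s)),
            Ideal.Quotient.mk J (rename (Prod.map σ τ) f) = q} =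
      (Algebra.adjoin F
        {Ideal.Quotient.mk J (∑ i : Fin r, ∑ j : Fin s, X (i, j))} :
        Subalgebra F (MvPolynomial (Fin r × Fin s) F ⧸ J)) := by
  classical
  have hJ' : J = Ideal.span (genSet r s F) := hJ
  subst hJ'
  ext q
  simp only [Set.mem_setOf_eq, SetLike.mem_coe]
  constructor
  · -- invariant → in adjoin
    intro hq
    obtain ⟨f, rfl⟩ := Ideal.Quotient.mk_surjective q
    set Nn := Fintype.card (Equiv.Perm (Fin r) × Equiv.Perm (Fin s)) with hNn
    have hNnpos : 0 < Nn := Fintype.card_pos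
    have hPsi : Psi f = Nn • Ideal.Quotient.mk (Ideal.span (genSet r s F)) f := by
      unfold Psi
      rw [Finset.sum_congr rfl fun e _ => hq f rfl e.1 e.2, Finset.sum_const,
        Finset.card_univ]
    have hmem : Psi f ∈ Algebra.adjoin F {Ideal.Quotient.mk (Ideal.span (genSet r s F))
        (∑ i : Fin r, ∑ j : Fin s, X (i, j))} := by
      have hrw : Psi f = ∑ d ∈ f.support, (coeff d f) • Psi (monomial d 1) := by
        conv_lhs => rw [f.as_sum]
        rw [Psi_sum]
        refine Finset.sum_congr rfl fun d _ => ?_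
        rw [← Psi_smul]
        congr 1
        rw [smul_monomial, smul_eq_mul, mul_one]
      rw [hrw]
      exact Subalgebra.sum_mem _ fun d _ => Subalgebra.smul_mem _ (Psi_monomial_mem d) _
    have hcast : ((Nn : ℕ) : F) ≠ 0 := Nat.cast_ne_zero.2 hNnpos.ne'
    have heq : Ideal.Quotient.mk (Ideal.span (genSet r s F)) f = ((Nn : ℕ) : F)⁻¹ • Psi f := by
      rw [hPsi, ← Nat.cast_smul_eq_nsmul F, inv_smul_smul₀ hcast]
    rw [heq]
    exact Subalgebra.smul_mem _ hmem _
  · -- in adjoin → invariant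
    intro hq f hf σ τ
    have hlift : ∀ a ∈ Ideal.span (genSet r s F),
        (Ideal.Quotient.mk (Ideal.span (genSet r s F))).comp
          (rename (Prod.map ⇑σ ⇑τ) : MvPolynomial (Fin r × Fin s) F →ₐ[F] _).toRingHom a = 0 :=
      fun a ha => Ideal.Quotient.eq_zero_iff_mem.2 (rename_mem_span σ τ ha)
    set φ := Ideal.Quotient.lift (Ideal.span (genSet r s F))
      ((Ideal.Quotient.mk (Ideal.span (genSet r s F))).comp
        (rename (Prod.map ⇑σ ⇑τ) : MvPolynomial (Fin r × Fin s) F →ₐ[F] _).toRingHom) hlift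
      with hφ
    have hφmk : ∀ x : MvPolynomial (Fin r × Fin s) F,
        φ (Ideal.Quotient.mk (Ideal.span (genSet r s F)) x) =
          Ideal.Quotient.mk (Ideal.span (genSet r s F)) (rename (Prod.map ⇑σ ⇑τ) x) :=
      fun x => Ideal.Quotient.lift_mk _ _ _
    have hfix : ∀ x ∈ Algebra.adjoin F {Ideal.Quotient.mk (Ideal.span (genSet r s F))
        (∑ i : Fin r, ∑ j : Fin s, X (i, j))}, φ x = x := by
      intro x hx
      refine Algebra.adjoin_induction (fun y hy => ?_) (fun c => ?_)
        (fun a b _ _ ha hb => ?_) (fun a b _ _ ha hb => ?_) hx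
      · rw [Set.mem_singleton_iff] at hy
        subst hy
        rw [hφmk]
        exact congrArg _ (rename_sigma σ τ)
      · have h1 : (algebraMap F (MvPolynomial (Fin r × Fin s) F ⧸ Ideal.span (genSet r s F))) c
            = Ideal.Quotient.mk (Ideal.span (genSet r s F)) (C c) := by
          rw [← Ideal.Quotient.mkₐ_eq_mk (R₁ := F), ← MvPolynomial.algebraMap_eq,
            AlgHom.commutes]
        rw [h1, hφmk]
        exact congrArg _ (rename_C _ c)
      · rw [map_add, ha, hb]
      · rw [map_mul, ha, hb]
    have : Ideal.Quotient.mk (Ideal.span (genSet r s F)) (rename (Prod.map ⇑σ ⇑τ) f)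
        = φ (Ideal.Quotient.mk (Ideal.span (genSet r s F)) f) := (hφmk f).symm
    rw [this, hf]
    exact hfix q hq
end

section
/- Let $A$ be a nonnegative integer matrix mapping to the pair of semistandard tableaux $(P,Q)$ of common shape $\lambda$ under the RSK correspondence. Then $\mathrm{zigzag}(A) = \lambda_1$, the length of the first row of $\lambda$. In particular, $\lambda$ has a single row if and only if the support of $A$ is contained in a zigzag. -/
/-- A set of matrix positions is a zigzag if any two of its elements are
comparable in the componentwise order. -/
def IsZigzag {k p : ℕ} (Z : Finset (Fin k × Fin p)) : Prop :=
  ∀ q ∈ Z, ∀ q' ∈ Z, (q.1 ≤ q'.1 ∧ q.2 ≤ q'.2) ∨ (q'.1 ≤ q.1 ∧ q'.2 ≤ q.2)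

/-- The zigzag number of a nonnegative integer matrix. -/
noncomputable def zigzagNum {k p : ℕ} (A : Fin k → Fin p → ℕ) : ℕ :=
  sSup {s : ℕ | ∃ Z : Finset (Fin k × Fin p), IsZigzag Z ∧ s = ∑ q ∈ Z, A q.1 q.2}

/-- The support of `A` is (contained in) a zigzag. -/
def IsZigzagMatrix {k p : ℕ} (A : Fin k → Fin p → ℕ) : Prop :=
  ∀ (i : Fin k) (j : Fin p) (i' : Fin k) (j' : Fin p),
    A i j ≠ 0 → A i' j' ≠ 0 → (i ≤ i' ∧ j ≤ j') ∨ (i' ≤ i ∧ j' ≤ j)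

/-- Schensted row insertion of `x` into a weakly increasing row: returns the new
row and the bumped entry, if any. -/
def rowInsert (x : ℕ) : List ℕ → List ℕ × Option ℕ
  | [] => ([x], none)
  | h :: t =>
    if h ≤ x then
      let r := rowInsert x t
      (h :: r.1, r.2)
    else (x :: t, some h)

/-- RSK insertion of an entry into a tableau (a list of rows). -/
def tabInsert : List (List ℕ) → ℕ → List (List ℕ)
  | [], x => [[x]]
  | r :: rest, x =>
    match rowInsert x r with
    | (r', none) => r' :: rest
    | (r', some y) => r' :: tabInsert rest y

/-- The insertion tableau `P` of a word under RSK. -/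
def insertionTableau (w : List ℕ) : List (List ℕ) := w.foldl tabInsert []

/-- The RSK word of a `ℕ`-matrix `A`: the bottom row of its biword, read in
row-major order (column index `j` repeated `A i j` times). -/
def rskWord {k p : ℕ} (A : Fin k → Fin p → ℕ) : List ℕ :=
  ((List.finRange k).map fun i =>
    ((List.finRange p).map fun j => List.replicate (A i j) (j : ℕ)).flatten).flatten

/-!
Schensted's theorem for the first row: by induction on the word, for every bound `a` the number of
entries `≤ a` in the first row of the insertion tableau is the length of a longest weakly
increasing subsequence of the entries `≤ a`. Inserting `x` replaces the first entry `> x` by `x`,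
which matches extending a weakly increasing subsequence of entries `≤ x` by `x`.

A subsequence of the RSK word is read off a subsequence of the lexicographically ordered biword;
it is weakly increasing exactly when its positions form a chain for the componentwise order, that
is, lie in a zigzag, and each position `q` occurs at most `A q` times. Hence `zigzag(A) = λ₁`.
Since `P` is a rearrangement of the word into nonempty rows, it has a single row iff `λ₁` is the
total mass of `A`, i.e. iff one zigzag carries all of `A`.
-/
open List

def HasSortedSublist (w : List ℕ) (n : ℕ) : Prop :=
  ∃ s, s <+ w ∧ s.Pairwise (· ≤ ·) ∧ s.length = n

theorem hasSortedSublist_append_singleton {l : List ℕ} {x n : ℕ} :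
    HasSortedSublist (l ++ [x]) n ↔
      HasSortedSublist l n ∨ 0 < n ∧ HasSortedSublist (l.filter (· ≤ x)) (n - 1) := by
  constructor
  · rintro ⟨s, hsub, hs, rfl⟩
    obtain ⟨s₁, s₂, rfl, h₁, h₂⟩ := sublist_append_iff.1 hsub
    rw [pairwise_append] at hs
    rcases sublist_singleton.1 h₂ with rfl | rfl
    · exact Or.inl ⟨s₁, h₁, hs.1, by simp⟩
    · have hle : ∀ a ∈ s₁, decide (a ≤ x) = true := fun a ha => by simpa using hs.2.2 a ha x
      refine Or.inr ⟨by simp, s₁, ?_, hs.1, by simp⟩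
      simpa [filter_eq_self.2 hle] using h₁.filter (· ≤ x)
  · rintro (⟨s, hsub, hs, rfl⟩ | ⟨hn, s, hsub, hs, hlen⟩)
    · exact ⟨s, hsub.trans (sublist_append_left _ _), hs, rfl⟩
    · refine ⟨s ++ [x], (hsub.trans filter_sublist).append (Sublist.refl _), ?_, by simp; omega⟩
      refine pairwise_append.2 ⟨hs, pairwise_singleton _ _, fun a ha b hb => ?_⟩
      rw [mem_singleton.1 hb]
      simpa using (mem_filter.1 (hsub.subset ha)).2

theorem perm_rowInsert (x : ℕ) :
    ∀ r : List ℕ, (rowInsert x r).1 ++ (rowInsert x r).2.toList ~ x :: r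
  | [] => by simp [rowInsert]
  | h :: t => by
    unfold rowInsert
    split_ifs
    · exact ((perm_rowInsert x t).cons h).trans (Perm.swap x h t)
    · exact (perm_append_singleton h t).cons x

theorem rowInsert_fst_ne_nil (x : ℕ) : ∀ r : List ℕ, (rowInsert x r).1 ≠ []
  | [] => by simp [rowInsert]
  | h :: t => by unfold rowInsert; split_ifs <;> simp

theorem pairwise_rowInsert {x : ℕ} :
    ∀ {r : List ℕ}, r.Pairwise (· ≤ ·) → (rowInsert x r).1.Pairwise (· ≤ ·)
  | [], _ => by simp [rowInsert]
  | h :: t, hr => by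
    rw [pairwise_cons] at hr
    unfold rowInsert
    split_ifs with hhx
    · refine pairwise_cons.2 ⟨fun b hb => ?_, pairwise_rowInsert hr.2⟩
      rcases mem_cons.1 ((perm_rowInsert x t).subset (mem_append_left _ hb)) with rfl | hb
      exacts [hhx, hr.1 b hb]
    · exact pairwise_cons.2 ⟨fun b hb => by have := hr.1 b hb; omega, hr.2⟩

theorem countP_rowInsert_of_lt {x a : ℕ} (hax : a < x) :
    ∀ r : List ℕ, (rowInsert x r).1.countP (· ≤ a) = r.countP (· ≤ a)
  | [] => by simp [rowInsert]; omega
  | h :: t => by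
    unfold rowInsert
    split_ifs with hhx
    · simp only [countP_cons, countP_rowInsert_of_lt hax t]
    · simp [show ¬ x ≤ a by omega, show ¬ h ≤ a by omega]

theorem countP_rowInsert_of_le {x a : ℕ} (hxa : x ≤ a) : ∀ {r : List ℕ}, r.Pairwise (· ≤ ·) →
    (rowInsert x r).1.countP (· ≤ a) = max (r.countP (· ≤ a)) (r.countP (· ≤ x) + 1)
  | [], _ => by simp [rowInsert, hxa]
  | h :: t, hr => by
    rw [pairwise_cons] at hr
    unfold rowInsert
    split_ifs with hhx
    · simp [countP_rowInsert_of_le hxa hr.2, hhx, hhx.trans hxa]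
    · have hx : t.countP (· ≤ x) = 0 :=
        countP_eq_zero.2 fun b hb => by have := hr.1 b hb; simp; omega
      by_cases hha : h ≤ a
      · simp [hx, hha, hhx, hxa]
      · have ha : t.countP (· ≤ a) = 0 :=
          countP_eq_zero.2 fun b hb => by have := hr.1 b hb; simp; omega
        simp [hx, ha, hha, hhx, hxa]

def firstRow (w : List ℕ) : List ℕ := (insertionTableau w).headD []

theorem insertionTableau_append_singleton (w : List ℕ) (x : ℕ) :
    insertionTableau (w ++ [x]) = tabInsert (insertionTableau w) x :=
  foldl_concat _ _ _ _

theorem firstRow_append_singleton (w : List ℕ) (x : ℕ) :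
    firstRow (w ++ [x]) = (rowInsert x (firstRow w)).1 := by
  rw [firstRow, firstRow, insertionTableau_append_singleton]
  rcases insertionTableau w with _ | ⟨r, rest⟩
  · rfl
  · rcases h : rowInsert x r with ⟨r', _ | y⟩ <;> simp [tabInsert, h]

theorem firstRow_spec (w : List ℕ) : (firstRow w).Pairwise (· ≤ ·) ∧
    ∀ a n, HasSortedSublist (w.filter (· ≤ a)) n ↔ n ≤ (firstRow w).countP (· ≤ a) := by
  induction w using reverseRecOn with
  | nil =>
    refine ⟨Pairwise.nil, fun a n => ⟨?_, fun hn => ⟨[], by simp_all [firstRow, insertionTableau]⟩⟩⟩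
    rintro ⟨s, hs, -, rfl⟩
    simp [sublist_nil.1 hs]
  | append_singleton w x ih =>
    obtain ⟨hr, hinv⟩ := ih
    rw [firstRow_append_singleton]
    refine ⟨pairwise_rowInsert hr, fun a n => ?_⟩
    rw [filter_append]
    by_cases hxa : x ≤ a
    · have hfilter : (w.filter (· ≤ a)).filter (· ≤ x) = w.filter (· ≤ x) := by
        rw [filter_filter]
        exact filter_congr fun b _ => by simp; omega
      rw [show [x].filter (· ≤ a) = [x] by simp [hxa], hasSortedSublist_append_singleton,
        hfilter, hinv, hinv, countP_rowInsert_of_le hxa hr]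
      omega
    · rw [show [x].filter (· ≤ a) = [] by simp [hxa], append_nil,
        countP_rowInsert_of_lt (by omega)]
      exact hinv a n

theorem hasSortedSublist_iff_le_length_firstRow {w : List ℕ} {n : ℕ} :
    HasSortedSublist w n ↔ n ≤ (firstRow w).length := by
  have hbound : ∀ b ∈ w ++ firstRow w, b ≤ (w ++ firstRow w).sum := fun b hb => le_sum_of_mem hb
  have h := (firstRow_spec w).2 (w ++ firstRow w).sum n
  rwa [filter_eq_self.2 fun b hb => by simpa using hbound b (mem_append_left _ hb),
    countP_eq_length.2 fun b hb => by simpa using hbound b (mem_append_right _ hb)] at h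

theorem perm_flatten_tabInsert :
    ∀ (T : List (List ℕ)) (x : ℕ), (tabInsert T x).flatten ~ x :: T.flatten
  | [], x => by simp [tabInsert]
  | r :: rest, x => by
    have hr := perm_rowInsert x r
    rcases h : rowInsert x r with ⟨r', _ | y⟩ <;> rw [h] at hr
    · simpa [tabInsert, h] using hr.append_right rest.flatten
    · simp only [tabInsert, h, flatten_cons]
      calc r' ++ (tabInsert rest y).flatten ~ r' ++ y :: rest.flatten :=
            (perm_flatten_tabInsert rest y).append_left r'
        _ = (r' ++ [y]) ++ rest.flatten := by simp
        _ ~ x :: (r ++ rest.flatten) := by simpa using hr.append_right rest.flatten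

theorem perm_flatten_insertionTableau (w : List ℕ) : (insertionTableau w).flatten ~ w := by
  induction w using reverseRecOn with
  | nil => rfl
  | append_singleton w x ih =>
    rw [insertionTableau_append_singleton]
    exact ((perm_flatten_tabInsert _ x).trans (ih.cons x)).trans (perm_append_singleton x w).symm

theorem ne_nil_of_mem_tabInsert :
    ∀ {T : List (List ℕ)} {x : ℕ}, (∀ r ∈ T, r ≠ []) → ∀ r ∈ tabInsert T x, r ≠ []
  | [], x, _ => by simp [tabInsert]
  | r :: rest, x, hT => by
    rw [forall_mem_cons] at hT
    rcases h : rowInsert x r with ⟨r', _ | y⟩ <;>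
      simp only [tabInsert, h, forall_mem_cons] <;> refine ⟨?_, ?_⟩
    · simpa [h] using rowInsert_fst_ne_nil x r
    · exact hT.2
    · simpa [h] using rowInsert_fst_ne_nil x r
    · exact ne_nil_of_mem_tabInsert hT.2

theorem ne_nil_of_mem_insertionTableau (w : List ℕ) : ∀ r ∈ insertionTableau w, r ≠ [] := by
  induction w using reverseRecOn with
  | nil => simp [insertionTableau]
  | append_singleton w x ih =>
    rw [insertionTableau_append_singleton]
    exact ne_nil_of_mem_tabInsert ih

theorem length_le_one_iff_length_flatten_le {α : Type*} :
    ∀ {T : List (List α)}, (∀ r ∈ T, r ≠ []) →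
      (T.length ≤ 1 ↔ T.flatten.length ≤ (T.headD []).length)
  | [], _ | [_], _ => by simp
  | r :: r' :: rest, hT => by
    have : r' ≠ [] := hT r' (by simp)
    simp [this]

theorem length_insertionTableau_le_one_iff (w : List ℕ) :
    (insertionTableau w).length ≤ 1 ↔ w.length ≤ (firstRow w).length := by
  rw [length_le_one_iff_length_flatten_le (ne_nil_of_mem_insertionTableau w),
    (perm_flatten_insertionTableau w).length_eq, firstRow]

theorem sum_count_eq_length {α : Type*} [BEq α] [LawfulBEq α] {t : List α} {Z : Finset α}
    (h : ∀ a ∈ t, a ∈ Z) : ∑ a ∈ Z, t.count a = t.length := by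
  induction t with
  | nil => simp
  | cons a t ih =>
    rw [forall_mem_cons] at h
    classical
    simp [count_cons, Finset.sum_add_distrib, ih h.2, h.1]

theorem Prod.le_of_toLex_le_of_snd_le {α β : Type*} [Preorder α] [LE β] {q q' : α × β}
    (hlex : toLex q ≤ toLex q') (h : q.2 ≤ q'.2) : q ≤ q' := by
  rcases Prod.Lex.toLex_le_toLex.1 hlex with h1 | ⟨h1, -⟩
  exacts [⟨h1.le, h⟩, ⟨h1.le, h⟩]

theorem Prod.snd_le_of_toLex_le {α β : Type*} [PartialOrder α] [Preorder β] {q q' : α × β}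
    (hlex : toLex q ≤ toLex q') (h : q ≤ q' ∨ q' ≤ q) : q.2 ≤ q'.2 := by
  rcases h with h | h
  · exact h.2
  · rcases Prod.Lex.toLex_le_toLex.1 hlex with h1 | ⟨-, h1⟩
    exacts [absurd h.1 h1.not_ge, h1]

section Biword

variable {k p : ℕ} (A : Fin k → Fin p → ℕ)

/-- The two-line array of `A`, listed column by column. -/
def biword : List (Fin k × Fin p) :=
  (finRange k).flatMap fun i => (finRange p).flatMap fun j => replicate (A i j) (i, j)

theorem rskWord_eq_map_biword : rskWord A = (biword A).map fun q => (q.2 : ℕ) := by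
  simp [rskWord, biword, flatMap, map_flatten, Function.comp_def]

theorem count_biword (q : Fin k × Fin p) : (biword A).count q = A q.1 q.2 := by
  simp only [biword, count_flatMap, count_replicate, Function.comp_def, ← Fin.sum_univ_def,
    beq_iff_eq]
  rw [← Fintype.sum_prod_type' fun i j => if (i, j) = q then A i j else 0]
  simp

theorem biword_pairwise_lex : (biword A).Pairwise fun q q' => toLex q ≤ toLex q' := by
  simp only [biword, pairwise_flatMap, mem_flatMap, mem_replicate]
  refine ⟨fun i _ => ⟨fun j _ => pairwise_replicate.2 (Or.inr le_rfl), ?_⟩, ?_⟩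
  · refine (pairwise_lt_finRange p).imp fun hj => ?_
    rintro _ ⟨-, rfl⟩ _ ⟨-, rfl⟩
    exact Prod.Lex.toLex_le_toLex.2 (Or.inr ⟨rfl, hj.le⟩)
  · refine (pairwise_lt_finRange k).imp fun hi => ?_
    rintro _ ⟨_, -, -, rfl⟩ _ ⟨_, -, -, rfl⟩
    exact Prod.Lex.toLex_le_toLex.2 (Or.inl hi)

theorem length_biword : (biword A).length = ∑ q : Fin k × Fin p, A q.1 q.2 := by
  rw [← sum_count_eq_length fun q _ => Finset.mem_univ q]
  exact Finset.sum_congr rfl fun q _ => count_biword A q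

theorem length_rskWord : (rskWord A).length = ∑ q : Fin k × Fin p, A q.1 q.2 := by
  rw [rskWord_eq_map_biword, length_map, length_biword]

theorem isZigzag_toFinset {t : List (Fin k × Fin p)} (ht : t.Pairwise (· ≤ ·)) :
    IsZigzag t.toFinset := by
  intro q hq q' hq'
  rw [mem_toFinset] at hq hq'
  exact Pairwise.forall_of_forall_of_flip (R := fun a b => a ≤ b ∨ b ≤ a)
    (fun _ _ => Or.inl le_rfl) (ht.imp Or.inl) (ht.imp Or.inr) hq hq'

theorem hasSortedSublist_rskWord_of_isZigzag {Z : Finset (Fin k × Fin p)} (hZ : IsZigzag Z) :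
    HasSortedSublist (rskWord A) (∑ q ∈ Z, A q.1 q.2) := by
  have hmem : ∀ q ∈ (biword A).filter (· ∈ Z), q ∈ Z := fun q hq => by
    simpa using (mem_filter.1 hq).2
  refine ⟨((biword A).filter (· ∈ Z)).map fun q => (q.2 : ℕ), ?_, ?_, ?_⟩
  · rw [rskWord_eq_map_biword]
    exact filter_sublist.map _
  · rw [pairwise_map]
    exact ((biword_pairwise_lex A).sublist filter_sublist).imp_of_mem fun hq hq' hlex =>
      Prod.snd_le_of_toLex_le hlex (hZ _ (hmem _ hq) _ (hmem _ hq'))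
  · rw [length_map, ← sum_count_eq_length hmem]
    refine Finset.sum_congr rfl fun q hq => ?_
    rw [count_filter (by simpa using hq), count_biword]

theorem exists_isZigzag_of_hasSortedSublist_rskWord {n : ℕ}
    (h : HasSortedSublist (rskWord A) n) : ∃ Z : Finset (Fin k × Fin p),
      IsZigzag Z ∧ n ≤ ∑ q ∈ Z, A q.1 q.2 := by
  obtain ⟨s, hsub, hs, rfl⟩ := h
  rw [rskWord_eq_map_biword, sublist_map_iff] at hsub
  obtain ⟨t, ht, rfl⟩ := hsub
  have hchain : t.Pairwise (· ≤ ·) :=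
    (((biword_pairwise_lex A).sublist ht).and (pairwise_map.1 hs)).imp fun h =>
      Prod.le_of_toLex_le_of_snd_le h.1 h.2
  refine ⟨t.toFinset, isZigzag_toFinset hchain, ?_⟩
  calc (t.map fun q => (q.2 : ℕ)).length = ∑ q ∈ t.toFinset, t.count q := by
        rw [length_map, sum_count_eq_length fun q => mem_toFinset.2]
    _ ≤ ∑ q ∈ t.toFinset, (biword A).count q := Finset.sum_le_sum fun q _ => ht.count_le q
    _ = ∑ q ∈ t.toFinset, A q.1 q.2 := Finset.sum_congr rfl fun q _ => count_biword A q

theorem bddAbove_zigzagSums :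
    BddAbove {s | ∃ Z : Finset (Fin k × Fin p), IsZigzag Z ∧ s = ∑ q ∈ Z, A q.1 q.2} :=
  ⟨∑ q : Fin k × Fin p, A q.1 q.2, by
    rintro _ ⟨Z, -, rfl⟩
    exact Finset.sum_le_sum_of_subset (Finset.subset_univ Z)⟩

theorem sum_le_zigzagNum {Z : Finset (Fin k × Fin p)} (hZ : IsZigzag Z) :
    ∑ q ∈ Z, A q.1 q.2 ≤ zigzagNum A :=
  le_csSup (bddAbove_zigzagSums A) ⟨Z, hZ, rfl⟩

theorem exists_isZigzag_sum_eq_zigzagNum :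
    ∃ Z : Finset (Fin k × Fin p), IsZigzag Z ∧ ∑ q ∈ Z, A q.1 q.2 = zigzagNum A := by
  have hempty : IsZigzag (∅ : Finset (Fin k × Fin p)) := by simp [IsZigzag]
  obtain ⟨Z, hZ, h⟩ := Nat.sSup_mem (by exact ⟨0, ∅, hempty, rfl⟩) (bddAbove_zigzagSums A)
  exact ⟨Z, hZ, h.symm⟩

theorem zigzagNum_eq_length_firstRow : zigzagNum A = (firstRow (rskWord A)).length := by
  apply le_antisymm
  · obtain ⟨Z, hZ, hsum⟩ := exists_isZigzag_sum_eq_zigzagNum A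
    rw [← hsum, ← hasSortedSublist_iff_le_length_firstRow]
    exact hasSortedSublist_rskWord_of_isZigzag A hZ
  · obtain ⟨Z, hZ, hle⟩ := exists_isZigzag_of_hasSortedSublist_rskWord A
      (hasSortedSublist_iff_le_length_firstRow.2 le_rfl)
    exact hle.trans (sum_le_zigzagNum A hZ)

theorem isZigzagMatrix_iff_sum_le_zigzagNum :
    IsZigzagMatrix A ↔ ∑ q : Fin k × Fin p, A q.1 q.2 ≤ zigzagNum A := by
  classical
  constructor
  · intro hA
    have hZ : IsZigzag {q : Fin k × Fin p | A q.1 q.2 ≠ 0} := fun q hq q' hq' =>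
      hA _ _ _ _ (Finset.mem_filter.1 hq).2 (Finset.mem_filter.1 hq').2
    rw [← Finset.sum_filter_ne_zero]
    exact sum_le_zigzagNum A hZ
  · intro hle
    obtain ⟨Z, hZ, hsum⟩ := exists_isZigzag_sum_eq_zigzagNum A
    have hsupp : ∀ q : Fin k × Fin p, A q.1 q.2 ≠ 0 → q ∈ Z := fun q hq => by
      by_contra hqZ
      have := Finset.sum_lt_sum_of_subset (f := fun q : Fin k × Fin p => A q.1 q.2)
        (Finset.subset_univ Z) (Finset.mem_univ q) hqZ (Nat.pos_of_ne_zero hq)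
        fun _ _ _ => Nat.zero_le _
      omega
    exact fun i j i' j' hij hij' => hZ _ (hsupp (i, j) hij) _ (hsupp (i', j') hij')

end Biword

/-- If `A ↦ (P,Q)` under RSK with common shape `λ`, then
`zigzag(A) = λ₁`, the length of the first row; in particular `λ` is a single
row iff the support of `A` is contained in a zigzag. -/
theorem zigzagNum_eq_firstRow_of_RSK {k p : ℕ} (A : Fin k → Fin p → ℕ) :
    zigzagNum A = ((insertionTableau (rskWord A)).headD []).length ∧
    ((insertionTableau (rskWord A)).length ≤ 1 ↔ IsZigzagMatrix A) := by
  refine ⟨zigzagNum_eq_length_firstRow A, ?_⟩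
  rw [length_insertionTableau_le_one_iff, length_rskWord, ← zigzagNum_eq_length_firstRow,
    isZigzagMatrix_iff_sum_le_zigzagNum]
end
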